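/- arXiv:2108.08564 — 9 statements merged into one kernel-verified Lean document; each statement's English description precedes it below -/
import Mathlib

section
/- Let I be a nonzero proper homogeneous ideal of R = K[X_1,...,X_s], minimally generated by homogeneous polynomials f_1,...,f_t, let p(I) = max{deg(f_i) : f_i^n ∉ mI^n for all n ≥ 1}, J = (f_i : deg(f_i) ≤ p(I)), and r(I) the reduction number of I with respect to J. Then the degree excess function ε(I;n) = d(I^n) − p(I)n satisfies ε(I;n) ≥ n for all n ≤ r(I). -/
open MvPolynomial

/-- The maximal generating degree `d(I)` of a homogeneous ideal: the least `d` such that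
`I` is generated by its elements of degree at most `d`. -/
noncomputable def maxGenDeg {K : Type*} [Field K] {σ : Type*}
    (I : Ideal (MvPolynomial σ K)) : ℕ :=
  sInf {d | I = Ideal.span {f | f ∈ I ∧ f.totalDegree ≤ d}}

/-!
Write `J = (φ ∈ I | deg φ ≤ p)` and `Q = I ∩ 𝔪^(p+1)`. For homogeneous `I` every homogeneous
component of an element of `I` lies in `J` or in `Q`, so `I ⊆ J + Q` and hence
`I^(n+1) ⊆ J I^n + Q^(n+1) ⊆ J I^n + 𝔪^((n+1)(p+1))`. As `J I^n` is homogeneous, an element of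
`I^(n+1)` of degree `< (n+1)(p+1)` already lies in `J I^n`. So `d(I^(n+1)) < (n+1)(p+1)` forces
`I^(n+1) = J I^n`, i.e. `r ≤ n`.
-/

attribute [local instance] MvPolynomial.gradedAlgebra

theorem Ideal.pow_succ_le_mul_pow_sup_pow {A : Type*} [CommSemiring A] {I J Q : Ideal A}
    (hQ : Q ≤ I) (hI : I ≤ J ⊔ Q) (n : ℕ) : I ^ (n + 1) ≤ J * I ^ n ⊔ Q ^ (n + 1) := by
  induction n with
  | zero => simpa using hI
  | succ n ih =>
    have hJI : I * (J * I ^ n) = J * I ^ (n + 1) := by ring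
    have hJQ : J * Q ^ (n + 1) ≤ J * I ^ (n + 1) :=
      Ideal.mul_mono_right (Ideal.pow_right_mono hQ _)
    calc I ^ (n + 2) = I * I ^ (n + 1) := pow_succ' _ _
      _ ≤ I * (J * I ^ n) ⊔ I * Q ^ (n + 1) := by
        rw [← Ideal.mul_sup]
        exact Ideal.mul_mono_right ih
      _ ≤ J * I ^ (n + 1) ⊔ (J ⊔ Q) * Q ^ (n + 1) := sup_le_sup hJI.le (Ideal.mul_mono_left hI)
      _ ≤ J * I ^ (n + 1) ⊔ Q ^ (n + 2) := by
        rw [Ideal.sup_mul, ← pow_succ']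
        exact sup_le le_sup_left (sup_le_sup_right hJQ _)

theorem Ideal.IsHomogeneous.pow {ι σ A : Type*} [CommSemiring A] [DecidableEq ι] [AddMonoid ι]
    [SetLike σ A] [AddSubmonoidClass σ A] {𝒜 : ι → σ} [GradedRing 𝒜] {I : Ideal A}
    (hI : I.IsHomogeneous 𝒜) (n : ℕ) : (I ^ n).IsHomogeneous 𝒜 := by
  induction n with
  | zero => simpa [Ideal.one_eq_top] using Ideal.IsHomogeneous.top 𝒜
  | succ n ih => rw [pow_succ]; exact ih.mul hI

namespace MvPolynomial

variable {R σ : Type*} [CommSemiring R]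

theorem mem_of_forall_homogeneousComponent_mem {I : Ideal (MvPolynomial σ R)}
    {φ : MvPolynomial σ R} (h : ∀ d, homogeneousComponent d φ ∈ I) : φ ∈ I := by
  rw [← sum_homogeneousComponent φ]
  exact Ideal.sum_mem _ fun d _ => h d

theorem IsHomogeneous.mem_pow_idealOfVars {φ : MvPolynomial σ R} {d D : ℕ}
    (hφ : φ.IsHomogeneous d) (hD : D ≤ d) : φ ∈ idealOfVars σ R ^ D := by
  rw [mem_pow_idealOfVars_iff]
  intro x hx
  by_contra! hx'
  exact mem_support_iff.mp hx (hφ.coeff_eq_zero (by omega))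

theorem homogeneousComponent_eq_zero_of_mem_pow_idealOfVars {φ : MvPolynomial σ R} {d D : ℕ}
    (hφ : φ ∈ idealOfVars σ R ^ D) (hd : d < D) : homogeneousComponent d φ = 0 := by
  ext x
  rw [coeff_homogeneousComponent, coeff_zero]
  split_ifs with hx
  · exact (mem_pow_idealOfVars_iff' D φ).mp hφ x (hx ▸ hd)
  · rfl

theorem mem_of_mem_sup_pow_idealOfVars {H : Ideal (MvPolynomial σ R)}
    (hH : H.IsHomogeneous (homogeneousSubmodule σ R)) {D : ℕ} {φ : MvPolynomial σ R}
    (hφ : φ ∈ H ⊔ idealOfVars σ R ^ D) (hdeg : φ.totalDegree < D) : φ ∈ H := by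
  obtain ⟨a, ha, b, hb, rfl⟩ := Submodule.mem_sup.mp hφ
  refine mem_of_forall_homogeneousComponent_mem fun d => ?_
  rcases lt_or_ge d D with hd | hd
  · rw [map_add, homogeneousComponent_eq_zero_of_mem_pow_idealOfVars hb hd, add_zero]
    exact homogeneousComponent_mem_of_mem hH ha d
  · rw [homogeneousComponent_eq_zero d _ (hdeg.trans_le hd)]
    exact H.zero_mem

/-- A homogeneous stand-in for `Ideal.span {φ | φ ∈ I ∧ φ.totalDegree ≤ p}`. -/
noncomputable def lowDegreeSpan (I : Ideal (MvPolynomial σ R)) (p : ℕ) :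
    Ideal (MvPolynomial σ R) :=
  Ideal.span {φ | φ ∈ I ∧ ∃ d ≤ p, φ.IsHomogeneous d}

theorem isHomogeneous_lowDegreeSpan (I : Ideal (MvPolynomial σ R)) (p : ℕ) :
    (lowDegreeSpan I p).IsHomogeneous (homogeneousSubmodule σ R) :=
  Ideal.homogeneous_span _ _ fun _ ⟨_, d, _, hd⟩ => ⟨d, hd⟩

theorem lowDegreeSpan_le_span_totalDegree_le (I : Ideal (MvPolynomial σ R)) (p : ℕ) :
    lowDegreeSpan I p ≤ Ideal.span {φ | φ ∈ I ∧ φ.totalDegree ≤ p} :=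
  Ideal.span_mono fun _ ⟨hφ, _, hd, hhom⟩ => ⟨hφ, hhom.totalDegree_le.trans hd⟩

theorem le_lowDegreeSpan_sup_inf_pow_idealOfVars {I : Ideal (MvPolynomial σ R)}
    (hI : I.IsHomogeneous (homogeneousSubmodule σ R)) (p : ℕ) :
    I ≤ lowDegreeSpan I p ⊔ I ⊓ idealOfVars σ R ^ (p + 1) := by
  intro φ hφ
  refine mem_of_forall_homogeneousComponent_mem fun d => ?_
  have hcomp := homogeneousComponent_mem_of_mem hI hφ d
  have hhom := homogeneousComponent_isHomogeneous d φ
  rcases le_or_gt d p with hd | hd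
  · exact Ideal.mem_sup_left (Ideal.subset_span ⟨hcomp, d, hd, hhom⟩)
  · exact Ideal.mem_sup_right ⟨hcomp, hhom.mem_pow_idealOfVars hd⟩

theorem mem_span_totalDegree_le_mul_pow {I : Ideal (MvPolynomial σ R)}
    (hI : I.IsHomogeneous (homogeneousSubmodule σ R)) {p n : ℕ} {φ : MvPolynomial σ R}
    (hφ : φ ∈ I ^ (n + 1)) (hdeg : φ.totalDegree < (n + 1) * (p + 1)) :
    φ ∈ Ideal.span {ψ | ψ ∈ I ∧ ψ.totalDegree ≤ p} * I ^ n := by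
  have hsplit := Ideal.pow_succ_le_mul_pow_sup_pow inf_le_left
    (le_lowDegreeSpan_sup_inf_pow_idealOfVars hI p) n hφ
  have hhigh :
      (I ⊓ idealOfVars σ R ^ (p + 1)) ^ (n + 1) ≤ idealOfVars σ R ^ ((n + 1) * (p + 1)) := by
    rw [mul_comm, pow_mul]
    exact Ideal.pow_right_mono inf_le_right _
  have hlow := mem_of_mem_sup_pow_idealOfVars ((isHomogeneous_lowDegreeSpan I p).mul (hI.pow n))
    (sup_le_sup_left hhigh _ hsplit) hdeg
  exact Ideal.mul_mono_left (lowDegreeSpan_le_span_totalDegree_le I p) hlow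

end MvPolynomial

theorem span_totalDegree_le_maxGenDeg {K σ : Type*} [Field K] [Finite σ]
    (I : Ideal (MvPolynomial σ K)) :
    I = Ideal.span {φ | φ ∈ I ∧ φ.totalDegree ≤ maxGenDeg I} := by
  refine Nat.sInf_mem (s := {d | I = Ideal.span {φ | φ ∈ I ∧ φ.totalDegree ≤ d}}) ?_
  obtain ⟨G, hG⟩ := (inferInstance : IsNoetherianRing (MvPolynomial σ K)).noetherian I
  refine ⟨G.sup totalDegree, le_antisymm ?_ (Ideal.span_le.2 fun _ hφ => hφ.1)⟩
  conv_lhs => rw [← hG]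
  exact Ideal.span_le.2 fun φ hφ => Ideal.subset_span ⟨hG ▸ Ideal.subset_span hφ, G.le_sup hφ⟩

theorem pow_succ_eq_span_totalDegree_le_mul_pow {K σ : Type*} [Field K] [Finite σ]
    {I : Ideal (MvPolynomial σ K)} (hI : I.IsHomogeneous (homogeneousSubmodule σ K)) {p n : ℕ}
    (h : maxGenDeg (I ^ (n + 1)) < (n + 1) * (p + 1)) :
    I ^ (n + 1) = Ideal.span {φ | φ ∈ I ∧ φ.totalDegree ≤ p} * I ^ n := by
  refine le_antisymm ?_ ?_
  · rw [span_totalDegree_le_maxGenDeg (I ^ (n + 1))]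
    exact Ideal.span_le.2 fun φ ⟨hφ, hdeg⟩ =>
      mem_span_totalDegree_le_mul_pow hI hφ (hdeg.trans_lt h)
  · rw [pow_succ']
    exact Ideal.mul_mono_left (Ideal.span_le.2 fun _ hφ => hφ.1)

theorem degree_excess_ge_n_up_to_reduction_number_general
    {K : Type*} [Field K] (s t : ℕ) (f : Fin t → MvPolynomial (Fin s) K)
    (deg : Fin t → ℕ) (hhom : ∀ i, (f i).IsHomogeneous (deg i))
    (I : Ideal (MvPolynomial (Fin s) K)) (hI : I = Ideal.span (Set.range f))
    (p : ℕ)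
    (J : Ideal (MvPolynomial (Fin s) K))
    (hJ : J = Ideal.span {g | g ∈ I ∧ g.totalDegree ≤ p})
    (r : ℕ) (hr : r = sInf {n | I ^ (n + 1) = J * I ^ n}) :
    ∀ n ≤ r, p * n + n ≤ maxGenDeg (I ^ n) := by
  have hIhom : I.IsHomogeneous (homogeneousSubmodule (Fin s) K) :=
    hI ▸ Ideal.homogeneous_span _ _ fun _ ⟨i, hi⟩ => ⟨deg i, hi ▸ hhom i⟩
  rintro (_ | n) hn
  · simp
  by_contra! hlt
  have hred : I ^ (n + 1) = J * I ^ n :=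
    hJ ▸ pow_succ_eq_span_totalDegree_le_mul_pow hIhom (by linarith)
  have hrn : r ≤ n := hr ▸ Nat.sInf_le hred
  omega

/-- with Kodiyalam's construction, the degree excess function
`ε(I;n) = d(I^n) − p(I)·n` satisfies `ε(I;n) ≥ n` for all `n ≤ r(I)`. -/
theorem degree_excess_ge_n_up_to_reduction_number
    {K : Type*} [Field K] (s t : ℕ) (f : Fin t → MvPolynomial (Fin s) K)
    (deg : Fin t → ℕ) (hhom : ∀ i, (f i).IsHomogeneous (deg i))
    (I : Ideal (MvPolynomial (Fin s) K)) (hI : I = Ideal.span (Set.range f))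
    (hne : I ≠ ⊥) (hpr : I ≠ ⊤)
    (hmin : ∀ i, f i ∉ Ideal.span (f '' {j | j ≠ i}))
    (m : Ideal (MvPolynomial (Fin s) K)) (hm : m = Ideal.span (Set.range X))
    (p : ℕ) (hp : p = sSup {d | ∃ i, deg i = d ∧ ∀ n ≥ 1, f i ^ n ∉ m * I ^ n})
    (J : Ideal (MvPolynomial (Fin s) K))
    (hJ : J = Ideal.span {g | g ∈ I ∧ g.totalDegree ≤ p})
    (r : ℕ) (hr : r = sInf {n | I ^ (n + 1) = J * I ^ n}) :
    ∀ n ≤ r, p * n + n ≤ maxGenDeg (I ^ n) :=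
  degree_excess_ge_n_up_to_reduction_number_general s t f deg hhom I hI p J hJ r hr
end

section
/- Let a be a monomial ideal that is a reduction of a monomial ideal I, and f a monomial such that I = (a, f). Then the reduction number r_a(I) = min{t ≥ 1 : f^t ∈ a^t} − 1. -/
open MvPolynomial

/-- An ideal of a polynomial ring is a monomial ideal if it is generated by monomials. -/
def IsMonomialIdeal {K : Type*} [Field K] {σ : Type*}
    (I : Ideal (MvPolynomial σ K)) : Prop :=
  ∃ S : Set (σ →₀ ℕ), I = Ideal.span ((fun α => monomial α (1 : K)) '' S)

/-!
With `I = a + (f)` one has `I^(n+1) = a I^n + (f^(n+1))`, so `I^(n+1) = a I^n` exactly when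
`f^(n+1) ∈ a I^n`. Moreover `a I^(n+1) = a^(n+2) + f · a I^n`. A monomial lies in a sum of two
monomial ideals only if it lies in one of them, and `f` cancels in the domain `K[x]`, so by
induction `f^(n+1) ∈ a I^n` iff `f^t ∈ a^t` for some `1 ≤ t ≤ n + 1`.
-/

namespace Ideal

section CommSemiring

variable {R : Type*} [CommSemiring R] (a b : Ideal R) (n : ℕ)

theorem sup_pow_succ : (a ⊔ b) ^ (n + 1) = a * (a ⊔ b) ^ n ⊔ b ^ (n + 1) := by
  refine le_antisymm ?_ (sup_le ?_ (pow_right_mono le_sup_right _))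
  · induction n with
    | zero => simp
    | succ n ih =>
      set c := a ⊔ b
      have hbc : b ^ (n + 1) ≤ c ^ (n + 1) := pow_right_mono le_sup_right _
      calc c ^ (n + 1 + 1) = c * c ^ (n + 1) := pow_succ' c _
        _ ≤ c * (a * c ^ n ⊔ b ^ (n + 1)) := mul_mono_right ih
        _ = a * c ^ (n + 1) ⊔ (a * b ^ (n + 1) ⊔ b * b ^ (n + 1)) := by
          rw [mul_sup, mul_left_comm, ← pow_succ', sup_mul]
        _ ≤ a * c ^ (n + 1) ⊔ b ^ (n + 1 + 1) := by
          rw [← sup_assoc, sup_eq_left.mpr (mul_mono_right hbc), ← pow_succ']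
  · rw [pow_succ']
    exact mul_mono_left le_sup_left

theorem sup_pow_succ_eq_mul_pow_iff :
    (a ⊔ b) ^ (n + 1) = a * (a ⊔ b) ^ n ↔ b ^ (n + 1) ≤ a * (a ⊔ b) ^ n := by
  rw [sup_pow_succ, sup_eq_left]

theorem mul_sup_pow_succ : a * (a ⊔ b) ^ (n + 1) = a ^ (n + 2) ⊔ b * (a * (a ⊔ b) ^ n) := by
  rw [sup_comm a b, sup_pow_succ, mul_sup, mul_left_comm, ← pow_succ', sup_comm]

end CommSemiring

theorem mul_mem_span_singleton_mul_iff {R : Type*} [CommRing R] [IsDomain R] {x y : R}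
    (hx : x ≠ 0) {J : Ideal R} : x * y ∈ span {x} * J ↔ y ∈ J := by
  simp [mem_span_singleton_mul, mul_right_inj' hx]

end Ideal

theorem Nat.sInf_setOf_exists_le (p : ℕ → Prop) :
    sInf {n | ∃ m ≤ n, p m} = sInf {m | p m} := by
  by_cases h : ∃ m, p m
  · apply le_antisymm
    · exact Nat.sInf_le ⟨_, le_rfl, Nat.sInf_mem h⟩
    · obtain ⟨m, hm⟩ := h
      exact le_csInf ⟨m, m, le_rfl, hm⟩ fun n ⟨k, hkn, hk⟩ => (Nat.sInf_le hk).trans hkn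
  · push Not at h
    simp [h]

section MonomialIdeal

variable {K : Type*} [Field K] {σ : Type*}

namespace IsMonomialIdeal

variable {J L : Ideal (MvPolynomial σ K)}

theorem span_singleton_monomial (α : σ →₀ ℕ) :
    IsMonomialIdeal (Ideal.span {monomial α (1 : K)}) :=
  ⟨{α}, by rw [Set.image_singleton]⟩

theorem top : IsMonomialIdeal (⊤ : Ideal (MvPolynomial σ K)) := by
  simpa [monomial_zero'] using span_singleton_monomial (K := K) (0 : σ →₀ ℕ)

theorem sup (hJ : IsMonomialIdeal J) (hL : IsMonomialIdeal L) : IsMonomialIdeal (J ⊔ L) := by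
  obtain ⟨S, rfl⟩ := hJ
  obtain ⟨T, rfl⟩ := hL
  exact ⟨S ∪ T, by rw [Set.image_union, Ideal.span_union]⟩

open Pointwise in
theorem mul (hJ : IsMonomialIdeal J) (hL : IsMonomialIdeal L) : IsMonomialIdeal (J * L) := by
  obtain ⟨S, rfl⟩ := hJ
  obtain ⟨T, rfl⟩ := hL
  refine ⟨S + T, ?_⟩
  rw [Ideal.span_mul_span', ← Set.image2_mul, Set.image2_image_left, Set.image2_image_right,
    ← Set.image2_add, Set.image_image2]
  simp_rw [monomial_mul, one_mul]

theorem pow (hJ : IsMonomialIdeal J) : ∀ n : ℕ, IsMonomialIdeal (J ^ n)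
  | 0 => by simpa using top
  | n + 1 => by simpa [pow_succ] using (hJ.pow n).mul hJ

theorem monomial_mem_span_iff {S : Set (σ →₀ ℕ)} {β : σ →₀ ℕ} :
    monomial β (1 : K) ∈ Ideal.span ((fun α => monomial α (1 : K)) '' S) ↔
      ∃ α ∈ S, α ≤ β := by
  classical
  rw [mem_ideal_span_monomial_image, support_monomial, if_neg one_ne_zero]
  simp

theorem monomial_mem_sup_iff (hJ : IsMonomialIdeal J) (hL : IsMonomialIdeal L)
    {β : σ →₀ ℕ} :
    monomial β (1 : K) ∈ J ⊔ L ↔ monomial β 1 ∈ J ∨ monomial β 1 ∈ L := by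
  obtain ⟨S, rfl⟩ := hJ
  obtain ⟨T, rfl⟩ := hL
  simp only [← Ideal.span_union, ← Set.image_union, monomial_mem_span_iff, Set.mem_union,
    or_and_right, exists_or]

end IsMonomialIdeal

variable {a : Ideal (MvPolynomial σ K)}

theorem monomial_pow_succ_mem_mul_sup_span_pow_iff (ha : IsMonomialIdeal a) (α : σ →₀ ℕ)
    (n : ℕ) :
    monomial α (1 : K) ^ (n + 1) ∈ a * (a ⊔ Ideal.span {monomial α 1}) ^ n ↔
      ∃ t ≤ n, monomial α (1 : K) ^ (t + 1) ∈ a ^ (t + 1) := by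
  have hpow (k : ℕ) : monomial α (1 : K) ^ k = monomial (k • α) 1 := by
    rw [monomial_pow, one_pow]
  have hF := IsMonomialIdeal.span_singleton_monomial (K := K) α
  have hf0 : monomial α (1 : K) ≠ 0 := monomial_eq_zero.not.mpr one_ne_zero
  induction n with
  | zero => simp
  | succ n ih =>
    have hcancel := Ideal.mul_mem_span_singleton_mul_iff hf0 (y := monomial α (1 : K) ^ (n + 1))
      (J := a * (a ⊔ Ideal.span {monomial α 1}) ^ n)
    rw [← pow_succ'] at hcancel
    rw [Ideal.mul_sup_pow_succ, hpow,
      IsMonomialIdeal.monomial_mem_sup_iff (ha.pow _) (hF.mul (ha.mul ((ha.sup hF).pow n))),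
      ← hpow, hcancel]
    simp only [ih, Nat.le_succ_iff, or_and_right, exists_or, exists_eq_left, or_comm]

theorem sup_span_monomial_pow_succ_eq_mul_pow_iff (ha : IsMonomialIdeal a) (α : σ →₀ ℕ)
    (n : ℕ) :
    (a ⊔ Ideal.span {monomial α (1 : K)}) ^ (n + 1) =
        a * (a ⊔ Ideal.span {monomial α 1}) ^ n ↔
      ∃ t ≤ n, monomial α (1 : K) ^ (t + 1) ∈ a ^ (t + 1) := by
  rw [Ideal.sup_pow_succ_eq_mul_pow_iff, Ideal.span_singleton_pow,
    Ideal.span_singleton_le_iff_mem]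
  exact monomial_pow_succ_mem_mul_sup_span_pow_iff ha α n

end MonomialIdeal

theorem reduction_number_of_monomial_adjunction_general
    {K : Type*} [Field K] (s : ℕ)
    (a I : Ideal (MvPolynomial (Fin s) K)) (f : MvPolynomial (Fin s) K)
    (ha : IsMonomialIdeal a)
    (hf : ∃ α : Fin s →₀ ℕ, f = monomial α (1 : K))
    (hIa : I = a ⊔ Ideal.span {f})
    (hred : ∃ N : ℕ, ∀ n ≥ N, I ^ (n + 1) = a * I ^ n) :
    sInf {n | I ^ (n + 1) = a * I ^ n} + 1 = sInf {t | 1 ≤ t ∧ f ^ t ∈ a ^ t} := by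
  obtain ⟨α, rfl⟩ := hf
  subst hIa
  have key := sup_span_monomial_pow_succ_eq_mul_pow_iff ha α
  obtain ⟨N, hN⟩ := hred
  obtain ⟨t, -, ht⟩ := (key N).1 (hN N le_rfl)
  have hpos : 1 ≤ sInf {t | 1 ≤ t ∧ monomial α (1 : K) ^ t ∈ a ^ t} :=
    le_csInf ⟨t + 1, le_add_self, ht⟩ fun _ h => h.1
  simp only [key, Nat.sInf_setOf_exists_le, ← Nat.sInf_add hpos, le_add_self, true_and]

/-- if the monomial ideal `a` is a reduction of `I = (a, f)` with `f` a
monomial, then `r_a(I) = min{t ≥ 1 : f^t ∈ a^t} − 1`. -/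
theorem reduction_number_of_monomial_adjunction
    {K : Type*} [Field K] (s : ℕ)
    (a I : Ideal (MvPolynomial (Fin s) K)) (f : MvPolynomial (Fin s) K)
    (ha : IsMonomialIdeal a) (hI : IsMonomialIdeal I)
    (hf : ∃ α : Fin s →₀ ℕ, f = monomial α (1 : K))
    (hIa : I = a ⊔ Ideal.span {f})
    (hred : ∃ N : ℕ, ∀ n ≥ N, I ^ (n + 1) = a * I ^ n) :
    sInf {n | I ^ (n + 1) = a * I ^ n} + 1 = sInf {t | 1 ≤ t ∧ f ^ t ∈ a ^ t} :=
  reduction_number_of_monomial_adjunction_general s a I f ha hf hIa hred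
end

section
/- Let p ≥ 4 and 2 ≤ a ≤ p−2 be integers with a not dividing p−1, and set m_i = X_1^{p−i}X_2^i. Let J = (m_0, m_p, m_{p−1}) and m = X_1^{p−1}X_2^a in K[X_1,X_2]. Then m^t ∉ J^t for all integers t with 0 < t ≤ ⌊(p−1)/a⌋, while m^{r+1} ∈ J^{r+1} for r = ⌊(p−1)/a⌋. -/
/-!
The ideal `J = (X₁^p, X₂^p, X₁X₂^{p-1})` lies in `(X₁^p) + (X₂^{p-1})`, hence `J^t` lies in the
monomial ideal `(X₁^{pt}, X₂^{p-1})`. The monomial `m^t = X₁^{(p-1)t}X₂^{at}` escapes it because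
`at ≤ ar < p - 1`, the last inequality being strict exactly because `a ∤ p - 1`. Conversely
`r ≤ p - 2` and `a(r+1) > p - 1`, so `m^{r+1}` is divisible by `m₀^r m_{p-1} = X₁^{pr+1}X₂^{p-1}`.
-/

open MvPolynomial

namespace Ideal

theorem sup_pow_le_pow_sup {R : Type*} [CommSemiring R] (I J : Ideal R) (t : ℕ) :
    (I ⊔ J) ^ t ≤ I ^ t ⊔ J := by
  induction t with
  | zero => simp
  | succ t ih =>
    calc (I ⊔ J) ^ (t + 1) = (I ⊔ J) ^ t * (I ⊔ J) := pow_succ _ _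
      _ ≤ (I ^ t ⊔ J) * (I ⊔ J) := mul_mono_left ih
      _ ≤ I ^ (t + 1) ⊔ J := by
        rw [sup_mul, mul_sup, mul_sup, pow_succ]
        exact sup_le (sup_le le_sup_left (mul_le_right.trans le_sup_right))
          ((sup_le mul_le_left mul_le_left).trans le_sup_right)

end Ideal

namespace MvPolynomial

variable {σ R : Type*} [CommSemiring R]

theorem X_pow_mul_X_pow_eq_monomial (i j : σ) (e f : ℕ) :
    (X i ^ e * X j ^ f : MvPolynomial σ R) =
      monomial (Finsupp.single i e + Finsupp.single j f) 1 := by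
  rw [X_pow_eq_monomial, X_pow_eq_monomial, monomial_mul, one_mul]

theorem X_pow_mul_X_pow_mem_span_X_pow_pair_iff [Nontrivial R] {i j : σ} (hij : i ≠ j)
    {e f k l : ℕ} :
    (X i ^ e * X j ^ f : MvPolynomial σ R) ∈ Ideal.span {X i ^ k, X j ^ l} ↔ k ≤ e ∨ l ≤ f := by
  classical
  have hgen : ({X i ^ k, X j ^ l} : Set (MvPolynomial σ R)) =
      (fun s => monomial s (1 : R)) '' {Finsupp.single i k, Finsupp.single j l} := by
    simp [Set.image_insert_eq, X_pow_eq_monomial]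
  rw [hgen, mem_ideal_span_monomial_image, X_pow_mul_X_pow_eq_monomial,
    support_monomial, if_neg one_ne_zero]
  simp [Finsupp.single_le_iff, hij, hij.symm]

theorem span_X_pow_triple_le (i j : σ) (p : ℕ) :
    Ideal.span {X i ^ p, X j ^ p, X i * X j ^ (p - 1)} ≤
      Ideal.span {(X i : MvPolynomial σ R) ^ p} ⊔ Ideal.span {X j ^ (p - 1)} := by
  rw [Ideal.span_le]
  rintro x (rfl | rfl | rfl)
  · exact Ideal.mem_sup_left (Ideal.subset_span rfl)
  · exact Ideal.mem_sup_right (Ideal.mem_span_singleton.2 (pow_dvd_pow _ (Nat.sub_le p 1)))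
  · exact Ideal.mem_sup_right (Ideal.mem_span_singleton.2 (dvd_mul_left _ _))

theorem le_or_le_of_X_pow_mul_X_pow_mem_pow_span_X_pow_triple [Nontrivial R] {i j : σ}
    (hij : i ≠ j) {p t e f : ℕ}
    (h : (X i ^ e * X j ^ f : MvPolynomial σ R) ∈
      Ideal.span {X i ^ p, X j ^ p, X i * X j ^ (p - 1)} ^ t) :
    p * t ≤ e ∨ p - 1 ≤ f := by
  have hle := (Ideal.pow_right_mono (span_X_pow_triple_le (R := R) i j p) t).trans
    (Ideal.sup_pow_le_pow_sup _ _ t)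
  rw [Ideal.span_singleton_pow, ← pow_mul, ← Ideal.span_insert] at hle
  exact (X_pow_mul_X_pow_mem_span_X_pow_pair_iff hij).1 (hle h)

theorem X_pow_mul_X_pow_mem_pow_succ_span_X_pow_triple (i j : σ) {p r e f : ℕ}
    (he : p * r + 1 ≤ e) (hf : p - 1 ≤ f) :
    (X i ^ e * X j ^ f : MvPolynomial σ R) ∈
      Ideal.span {X i ^ p, X j ^ p, X i * X j ^ (p - 1)} ^ (r + 1) := by
  have hprod : (X i ^ p) ^ r * (X i * X j ^ (p - 1)) ∈
      Ideal.span {(X i : MvPolynomial σ R) ^ p, X j ^ p, X i * X j ^ (p - 1)} ^ (r + 1) := by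
    rw [pow_succ]
    exact Ideal.mul_mem_mul (Ideal.pow_mem_pow (Ideal.subset_span (by simp)) r)
      (Ideal.subset_span (by simp))
  have hdvd : (X i ^ p) ^ r * (X i * X j ^ (p - 1)) ∣ (X i ^ e * X j ^ f : MvPolynomial σ R) := by
    rw [← pow_mul, ← mul_assoc, ← pow_succ]
    exact mul_dvd_mul (pow_dvd_pow _ he) (pow_dvd_pow _ hf)
  exact Ideal.mem_of_dvd _ hdvd hprod

end MvPolynomial

theorem monomial_powers_and_reduction_general
    {K : Type*} [Field K] (p a : ℕ) (ha2 : 2 ≤ a)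
    (hnd : ¬ a ∣ (p - 1))
    (J : Ideal (MvPolynomial (Fin 2) K))
    (hJ : J = Ideal.span {X 0 ^ p, X 1 ^ p, X 0 * X 1 ^ (p - 1)})
    (m : MvPolynomial (Fin 2) K) (hm : m = X 0 ^ (p - 1) * X 1 ^ a)
    (r : ℕ) (hr : r = (p - 1) / a) :
    (∀ t : ℕ, 0 < t → t ≤ r → m ^ t ∉ J ^ t) ∧ m ^ (r + 1) ∈ J ^ (r + 1) := by
  subst hJ hm
  have har : a * r < p - 1 := hr ▸ Nat.mul_div_lt_iff_not_dvd.2 hnd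
  have hr_lt : r < p - 1 := hr ▸ Nat.div_lt_self (by omega) ha2
  have hsucc : p - 1 < a * (r + 1) := hr ▸ Nat.lt_mul_div_succ _ (by omega)
  simp only [mul_pow, ← pow_mul]
  refine ⟨fun t ht htr hmem => ?_, ?_⟩
  · rcases le_or_le_of_X_pow_mul_X_pow_mem_pow_span_X_pow_triple Fin.zero_ne_one hmem with h | h
    · have := Nat.le_of_mul_le_mul_right h ht
      omega
    · have := Nat.mul_le_mul_left a htr
      omega
  · refine X_pow_mul_X_pow_mem_pow_succ_span_X_pow_triple 0 1 ?_ hsucc.le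
    obtain ⟨q, rfl⟩ : ∃ q, p = q + 1 := ⟨p - 1, by omega⟩
    simp only [Nat.add_sub_cancel] at hr_lt ⊢
    nlinarith

/-- for `p ≥ 4`, `2 ≤ a ≤ p−2` with `a ∤ p−1`, the monomial
`m = X₁^{p−1}X₂^a` satisfies `m^t ∉ J^t` for `0 < t ≤ ⌊(p−1)/a⌋` and
`m^{r+1} ∈ J^{r+1}` for `r = ⌊(p−1)/a⌋`, where `J = (X₁^p, X₂^p, X₁X₂^{p−1})`. -/
theorem monomial_powers_and_reduction
    {K : Type*} [Field K] (p a : ℕ) (hp : 4 ≤ p) (ha2 : 2 ≤ a) (hap : a ≤ p - 2)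
    (hnd : ¬ a ∣ (p - 1))
    (J : Ideal (MvPolynomial (Fin 2) K))
    (hJ : J = Ideal.span {X 0 ^ p, X 1 ^ p, X 0 * X 1 ^ (p - 1)})
    (m : MvPolynomial (Fin 2) K) (hm : m = X 0 ^ (p - 1) * X 1 ^ a)
    (r : ℕ) (hr : r = (p - 1) / a) :
    (∀ t : ℕ, 0 < t → t ≤ r → m ^ t ∉ J ^ t) ∧ m ^ (r + 1) ∈ J ^ (r + 1) :=
  monomial_powers_and_reduction_general p a ha2 hnd J hJ m hm r hr
end

section
/- Let p ≥ 4 and 2 ≤ a ≤ p−2 with a not dividing p−1, and let J_{p,a} = (X_1^p, X_2^p, X_1 X_2^{p−1}, X_1^{p−1} X_2^a) ⊂ K[X_1,X_2]. Then the maximal generating degree satisfies d(J_{p,a}^n) = pn + n(a−1) for 1 ≤ n ≤ r−1 and d(J_{p,a}^n) = pn + r(a−1) for n ≥ r, where r = ⌊(p−1)/a⌋. -/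
/-! `J^n` is the monomial ideal generated by the products `g₁^i g₂^j g₃^k g₄^l`,
`i + j + k + l = n`, of the four generators, and such a product has degree `pn + l(a - 1)`.
Put `r = ⌊(p - 1)/a⌋`. Since `r + 2 ≤ p` and `p - 1 < a(r + 1)`, `g₄^(r+1)` is divisible by
`g₁^r g₃`, so the products with `l ≤ min n r` already generate `J^n`. Conversely, `a ∤ p - 1` gives
`ar < p - 1`, so for `m = min n r` no product with a factor `g₂` or `g₃` divides `g₁^(n-m) g₄^m`,
and every product dividing it has at least `m` factors `g₄`. Hence `d(J^n) = pn + min(n, r)(a - 1)`.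
-/

open MvPolynomial

open Pointwise

namespace MvPolynomial
variable {σ R : Type*} [CommSemiring R]

theorem monomial_one_image_nsmul (S : Set (σ →₀ ℕ)) (n : ℕ) :
    (monomial · (1 : R)) '' (n • S) = ((monomial · (1 : R)) '' S) ^ n := by
  induction n with
  | zero => simp [Set.singleton_one]
  | succ n ih =>
    rw [succ_nsmul, pow_succ, ← ih, ← Set.image2_add, ← Set.image2_mul]
    exact Set.image_image2_distrib fun s t => by simp [monomial_mul]

theorem span_monomial_image_pow (S : Set (σ →₀ ℕ)) (n : ℕ) :
    Ideal.span ((monomial · (1 : R)) '' S) ^ n = Ideal.span ((monomial · (1 : R)) '' (n • S)) := by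
  rw [monomial_one_image_nsmul]
  exact Submodule.span_pow _ n

theorem span_monomial_image_eq_span_totalDegree_le_iff [Nontrivial R] {S : Set (σ →₀ ℕ)}
    {d : ℕ} :
    Ideal.span ((monomial · (1 : R)) '' S) =
        Ideal.span {f | f ∈ Ideal.span ((monomial · (1 : R)) '' S) ∧ f.totalDegree ≤ d} ↔
      ∀ s ∈ S, ∃ t ∈ S, t ≤ s ∧ t.degree ≤ d := by
  set I := Ideal.span ((monomial · (1 : R)) '' S)
  constructor
  · intro hI s hs
    have hle : Ideal.span {f | f ∈ I ∧ f.totalDegree ≤ d} ≤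
        Ideal.span ((monomial · (1 : R)) '' {m | (∃ t ∈ S, t ≤ m) ∧ m.degree ≤ d}) := by
      refine Ideal.span_le.2 fun f ⟨hf, hfd⟩ => mem_ideal_span_monomial_image.2 fun m hm => ?_
      exact ⟨m, ⟨mem_ideal_span_monomial_image.1 hf m hm, (le_totalDegree hm).trans hfd⟩, le_rfl⟩
    have hs' := hle (hI ▸ Ideal.subset_span ⟨s, hs, rfl⟩ : monomial s (1 : R) ∈ _)
    classical
    obtain ⟨m, ⟨⟨t, ht, htm⟩, hmd⟩, hms⟩ :=
      mem_ideal_span_monomial_image.1 hs' s (by simp [support_monomial])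
    exact ⟨t, ht, htm.trans hms, (Finsupp.degree_mono htm).trans hmd⟩
  · intro h
    refine le_antisymm (Ideal.span_le.2 ?_) (Ideal.span_le.2 fun f hf => hf.1)
    rintro _ ⟨s, hs, rfl⟩
    obtain ⟨t, ht, hts, htd⟩ := h s hs
    have hmem : monomial t (1 : R) ∈ Ideal.span {f | f ∈ I ∧ f.totalDegree ≤ d} :=
      Ideal.subset_span ⟨Ideal.subset_span ⟨t, ht, rfl⟩, (totalDegree_monomial_le t 1).trans htd⟩
    have hdvd : monomial s (1 : R) = monomial (s - t) 1 * monomial t 1 := by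
      rw [monomial_mul, one_mul, tsub_add_cancel_of_le hts]
    simpa only [SetLike.mem_coe, hdvd] using Ideal.mul_mem_left _ _ hmem

end MvPolynomial

theorem maxGenDeg_span_monomial_image {K σ : Type*} [Field K] (S : Set (σ →₀ ℕ)) :
    maxGenDeg (Ideal.span ((monomial · (1 : K)) '' S)) =
      sInf {d | ∀ s ∈ S, ∃ t ∈ S, t ≤ s ∧ t.degree ≤ d} := by
  simp only [maxGenDeg, span_monomial_image_eq_span_totalDegree_le_iff]

theorem Finsupp.nsmul_range_eq_image_linearCombination {ι M : Type*} [AddCommMonoid M]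
    (g : ι → M) (n : ℕ) :
    n • Set.range g = Finsupp.linearCombination ℕ g '' {c | c.degree = n} := by
  have h := Set.image_nsmul (Finsupp.linearCombination ℕ g) ((Finsupp.single · 1) '' Set.univ) n
  rw [Finsupp.nsmul_single_one_image, Set.image_univ, ← Set.range_comp] at h
  simpa [Function.comp_def] using h.symm

/-- The exponent of `(X₀^p)^i (X₁^p)^j (X₀X₁^(p-1))^k (X₀^(p-1)X₁^a)^l`. -/
noncomputable def jpaExponent (p a i j k l : ℕ) : Fin 2 →₀ ℕ :=
  Finsupp.single 0 (p * i + k + (p - 1) * l) + Finsupp.single 1 (p * j + (p - 1) * k + a * l)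

noncomputable def jpaGenerators (p a : ℕ) : Fin 4 → Fin 2 →₀ ℕ :=
  ![jpaExponent p a 1 0 0 0, jpaExponent p a 0 1 0 0, jpaExponent p a 0 0 1 0,
    jpaExponent p a 0 0 0 1]

def jpaPowExponents (p a n : ℕ) : Set (Fin 2 →₀ ℕ) :=
  {e | ∃ i j k l, i + j + k + l = n ∧ jpaExponent p a i j k l = e}

section Jpa

variable {p a : ℕ}

@[simp] theorem jpaExponent_apply_zero (i j k l : ℕ) :
    jpaExponent p a i j k l 0 = p * i + k + (p - 1) * l := by
  simp [jpaExponent]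

@[simp] theorem jpaExponent_apply_one (i j k l : ℕ) :
    jpaExponent p a i j k l 1 = p * j + (p - 1) * k + a * l := by
  simp [jpaExponent]

theorem jpaExponent_le_jpaExponent_iff {i j k l i' j' k' l' : ℕ} :
    jpaExponent p a i j k l ≤ jpaExponent p a i' j' k' l' ↔
      p * i + k + (p - 1) * l ≤ p * i' + k' + (p - 1) * l' ∧
        p * j + (p - 1) * k + a * l ≤ p * j' + (p - 1) * k' + a * l' := by
  simp [Finsupp.le_def, Fin.forall_fin_two]

theorem degree_jpaExponent (hp : 1 ≤ p) (ha : 1 ≤ a) (i j k l : ℕ) :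
    (jpaExponent p a i j k l).degree = p * (i + j + k + l) + l * (a - 1) := by
  obtain ⟨q, rfl⟩ : ∃ q, p = q + 1 := ⟨p - 1, by omega⟩
  obtain ⟨b, rfl⟩ : ∃ b, a = b + 1 := ⟨a - 1, by omega⟩
  simp only [Finsupp.degree_eq_sum, Fin.sum_univ_two, jpaExponent_apply_zero,
    jpaExponent_apply_one, Nat.add_sub_cancel]
  ring

theorem linearCombination_jpaGenerators (c : Fin 4 →₀ ℕ) :
    Finsupp.linearCombination ℕ (jpaGenerators p a) c =
      jpaExponent p a (c 0) (c 1) (c 2) (c 3) := by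
  ext x
  fin_cases x <;>
    simp [Finsupp.linearCombination_apply, Finsupp.sum_fintype, Fin.sum_univ_four,
      jpaGenerators] <;> ring

theorem monomial_jpaExponent {K : Type*} [Field K] (i j k l : ℕ) :
    (monomial (jpaExponent p a i j k l) 1 : MvPolynomial (Fin 2) K) =
      X 0 ^ (p * i + k + (p - 1) * l) * X 1 ^ (p * j + (p - 1) * k + a * l) := by
  rw [X_pow_eq_monomial, X_pow_eq_monomial, monomial_mul, one_mul, jpaExponent]

theorem span_jpa_eq_span_monomial_jpaGenerators {K : Type*} [Field K] :
    (Ideal.span {X 0 ^ p, X 1 ^ p, X 0 * X 1 ^ (p - 1), X 0 ^ (p - 1) * X 1 ^ a} :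
      Ideal (MvPolynomial (Fin 2) K)) =
      Ideal.span ((monomial · 1) '' Set.range (jpaGenerators p a)) := by
  simp only [jpaGenerators, Matrix.range_cons, Matrix.range_empty, Set.union_empty,
    Set.singleton_union, Set.image_insert_eq, Set.image_singleton, monomial_jpaExponent]
  congr 3 <;> simp

theorem nsmul_range_jpaGenerators (n : ℕ) :
    n • Set.range (jpaGenerators p a) = jpaPowExponents p a n := by
  rw [Finsupp.nsmul_range_eq_image_linearCombination]
  ext e
  constructor
  · rintro ⟨c, hc, rfl⟩
    refine ⟨c 0, c 1, c 2, c 3, ?_, (linearCombination_jpaGenerators c).symm⟩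
    rw [← hc, Finsupp.degree_eq_sum, Fin.sum_univ_four]
  · rintro ⟨i, j, k, l, hn, rfl⟩
    refine ⟨Finsupp.equivFunOnFinite.symm ![i, j, k, l], ?_, ?_⟩
    · simp [Finsupp.degree_eq_sum, Fin.sum_univ_four, ← hn]
    · simp [linearCombination_jpaGenerators]

variable {r : ℕ}

theorem jpaExponent_exchange (hrp : r + 2 ≤ p) (hpa : p - 1 ≤ a * (r + 1)) (i j k l : ℕ) :
    jpaExponent p a (i + r) j (k + 1) l ≤ jpaExponent p a i j k (l + (r + 1)) := by
  obtain ⟨q, rfl⟩ : ∃ q, p = q + 1 := ⟨p - 1, by omega⟩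
  simp only [Nat.add_sub_cancel] at hpa
  rw [jpaExponent_le_jpaExponent_iff, Nat.add_sub_cancel]
  constructor <;> nlinarith

theorem exists_jpaExponent_le (hrp : r + 2 ≤ p) (hpa : p - 1 ≤ a * (r + 1)) (i j k l : ℕ) :
    ∃ i' j' k' l', i' + j' + k' + l' = i + j + k + l ∧ l' ≤ r ∧
      jpaExponent p a i' j' k' l' ≤ jpaExponent p a i j k l := by
  induction l using Nat.strong_induction_on generalizing i k with
  | _ l ih =>
    by_cases hl : l ≤ r
    · exact ⟨i, j, k, l, rfl, hl, le_rfl⟩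
    obtain ⟨l, rfl⟩ : ∃ l', l = l' + (r + 1) := ⟨l - (r + 1), by omega⟩
    obtain ⟨i', j', k', l', hs, hl', hle⟩ := ih l (by omega) (i + r) (k + 1)
    exact ⟨i', j', k', l', by omega, hl', hle.trans (jpaExponent_exchange hrp hpa i j k l)⟩

theorem le_of_jpaExponent_le {m n i j k l : ℕ} (hra : a * r < p - 1) (hmr : m ≤ r) (hmn : m ≤ n)
    (hs : i + j + k + l = n) (h : jpaExponent p a i j k l ≤ jpaExponent p a (n - m) 0 0 m) :
    m ≤ l := by
  obtain ⟨q, rfl⟩ : ∃ q, p = q + 1 := ⟨p - 1, by omega⟩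
  obtain ⟨c, rfl⟩ : ∃ c, n = m + c := ⟨n - m, by omega⟩
  rw [Nat.add_sub_cancel] at hra
  rw [jpaExponent_le_jpaExponent_iff, Nat.add_sub_cancel, Nat.add_sub_cancel_left] at h
  obtain ⟨hx, hy⟩ := h
  have ham : a * m ≤ a * r := Nat.mul_le_mul_left a hmr
  have hj : j = 0 := by
    by_contra hj
    nlinarith [Nat.le_mul_of_pos_right (q + 1) (Nat.pos_of_ne_zero hj)]
  have hk : k = 0 := by
    by_contra hk
    nlinarith [Nat.le_mul_of_pos_right q (Nat.pos_of_ne_zero hk)]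
  subst hj hk
  by_contra hlm
  nlinarith

theorem exists_le_degree_le_of_mem_jpaPowExponents {n : ℕ} {s : Fin 2 →₀ ℕ} (ha : 1 ≤ a)
    (hrp : r + 2 ≤ p) (hpa : p - 1 ≤ a * (r + 1)) (hs : s ∈ jpaPowExponents p a n) :
    ∃ t ∈ jpaPowExponents p a n, t ≤ s ∧ t.degree ≤ p * n + min n r * (a - 1) := by
  obtain ⟨i, j, k, l, hn, rfl⟩ := hs
  obtain ⟨i', j', k', l', hs', hl', hle⟩ := exists_jpaExponent_le hrp hpa i j k l
  refine ⟨_, ⟨i', j', k', l', hs'.trans hn, rfl⟩, hle, ?_⟩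
  rw [degree_jpaExponent (by omega) ha, hs'.trans hn]
  gcongr
  omega

theorem le_degree_of_le_jpaExponent {n : ℕ} {t : Fin 2 →₀ ℕ} (ha : 1 ≤ a)
    (hra : a * r < p - 1) (ht : t ∈ jpaPowExponents p a n)
    (hle : t ≤ jpaExponent p a (n - min n r) 0 0 (min n r)) :
    p * n + min n r * (a - 1) ≤ t.degree := by
  obtain ⟨i, j, k, l, hn, rfl⟩ := ht
  have hl := le_of_jpaExponent_le hra (min_le_right n r) (min_le_left n r) hn hle
  rw [degree_jpaExponent (by omega) ha, hn]
  gcongr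

theorem maxGenDeg_span_jpa_pow {K : Type*} [Field K] (ha : 2 ≤ a) (hnd : ¬ a ∣ p - 1) (n : ℕ) :
    maxGenDeg ((Ideal.span {X 0 ^ p, X 1 ^ p, X 0 * X 1 ^ (p - 1), X 0 ^ (p - 1) * X 1 ^ a} :
      Ideal (MvPolynomial (Fin 2) K)) ^ n) = p * n + min n ((p - 1) / a) * (a - 1) := by
  set r := (p - 1) / a
  have hra : a * r < p - 1 := Nat.mul_div_lt_iff_not_dvd.2 hnd
  have hpa : p - 1 ≤ a * (r + 1) := (Nat.lt_mul_div_succ _ (by omega)).le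
  have hrp : r + 2 ≤ p := by have := Nat.mul_le_mul_right r ha; omega
  rw [span_jpa_eq_span_monomial_jpaGenerators, span_monomial_image_pow,
    maxGenDeg_span_monomial_image, nsmul_range_jpaGenerators]
  have hup (s) (hs : s ∈ jpaPowExponents p a n) :=
    exists_le_degree_le_of_mem_jpaPowExponents (by omega) hrp hpa hs
  refine le_antisymm (Nat.sInf_le hup) (le_csInf ⟨_, hup⟩ fun d hd => ?_)
  obtain ⟨t, ht, hle, htd⟩ := hd _ ⟨n - min n r, 0, 0, min n r, by omega, rfl⟩
  exact (le_degree_of_le_jpaExponent (by omega) hra ht hle).trans htd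

end Jpa

theorem maxGenDeg_of_Jpa_powers_general
    {K : Type*} [Field K] (p a : ℕ) (ha2 : 2 ≤ a)
    (hnd : ¬ a ∣ (p - 1))
    (Jpa : Ideal (MvPolynomial (Fin 2) K))
    (hJpa : Jpa = Ideal.span
      {X 0 ^ p, X 1 ^ p, X 0 * X 1 ^ (p - 1), X 0 ^ (p - 1) * X 1 ^ a})
    (r : ℕ) (hr : r = (p - 1) / a) :
    (∀ n : ℕ, 1 ≤ n → n ≤ r - 1 → maxGenDeg (Jpa ^ n) = p * n + n * (a - 1)) ∧
    (∀ n : ℕ, r ≤ n → maxGenDeg (Jpa ^ n) = p * n + r * (a - 1)) := by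
  subst hJpa hr
  refine ⟨fun n _ hn => ?_, fun n hn => ?_⟩
  · rw [maxGenDeg_span_jpa_pow ha2 hnd, min_eq_left (by omega)]
  · rw [maxGenDeg_span_jpa_pow ha2 hnd, min_eq_right hn]

/-- for `J_{p,a} = (X₁^p, X₂^p, X₁X₂^{p−1}, X₁^{p−1}X₂^a)` with `p ≥ 4`,
`2 ≤ a ≤ p−2` and `a ∤ p−1`, one has `d(J_{p,a}^n) = pn + n(a−1)` for `1 ≤ n ≤ r−1`
and `d(J_{p,a}^n) = pn + r(a−1)` for `n ≥ r`, where `r = ⌊(p−1)/a⌋`. -/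
theorem maxGenDeg_of_Jpa_powers
    {K : Type*} [Field K] (p a : ℕ) (hp : 4 ≤ p) (ha2 : 2 ≤ a) (hap : a ≤ p - 2)
    (hnd : ¬ a ∣ (p - 1))
    (Jpa : Ideal (MvPolynomial (Fin 2) K))
    (hJpa : Jpa = Ideal.span
      {X 0 ^ p, X 1 ^ p, X 0 * X 1 ^ (p - 1), X 0 ^ (p - 1) * X 1 ^ a})
    (r : ℕ) (hr : r = (p - 1) / a) :
    (∀ n : ℕ, 1 ≤ n → n ≤ r - 1 → maxGenDeg (Jpa ^ n) = p * n + n * (a - 1)) ∧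
    (∀ n : ℕ, r ≤ n → maxGenDeg (Jpa ^ n) = p * n + r * (a - 1)) :=
  maxGenDeg_of_Jpa_powers_general p a ha2 hnd Jpa hJpa r hr
end

section
/- Let p ≥ 4 and set m_i = X_1^{p−i}X_2^i, I_p = (m_0, m_p, m_1, m_{p−1}) ⊂ K[X_1,X_2]. Then for all n ≥ p−2, I_p^n equals the ideal generated by all monomials of degree pn, i.e., I_p^n = (X_1^{α_1}X_2^{α_2} : α_1 + α_2 = pn). -/
open MvPolynomial

/-!
Both ideals are generated by monomials, and `I_p ⊆ (x^a y^b : a + b = p)` gives `⊆` for every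
`n`. Conversely, write `a = p q + r` with `r < p`. If `q + r ≤ n` then
`x^a y^b = (x^p)^q (x y^(p-1))^r (y^p)^(n-q-r)`; otherwise `q + r ≥ n + 1 ≥ p - 1`, and
`x^a y^b = (x^p)^(q+r+1-p) (x^(p-1) y)^(p-r) (y^p)^(n-q-1)`.
-/

lemma exists_corner_exponents {p n a b : ℕ} (hn : p - 2 ≤ n) (hab : a + b = p * n) :
    ∃ c₀ c₁ c₂ c₃ : ℕ, c₀ + c₁ + c₂ + c₃ = n ∧
      a = p * c₀ + (p - 1) * c₁ + c₂ ∧ b = c₁ + (p - 1) * c₂ + p * c₃ := by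
  obtain rfl | hp := Nat.eq_zero_or_pos p
  · exact ⟨n, 0, 0, 0, by omega, by omega, by omega⟩
  obtain ⟨q, r, hr, rfl⟩ : ∃ q r, r < p ∧ a = p * q + r :=
    ⟨a / p, a % p, Nat.mod_lt a hp, (Nat.div_add_mod a p).symm⟩
  have hq : q ≤ n := Nat.le_of_mul_le_mul_left (by omega : p * q ≤ p * n) hp
  obtain ⟨t, rfl⟩ : ∃ t, p = t + 1 := ⟨p - 1, by omega⟩
  simp only [Nat.add_sub_cancel]
  by_cases h : q + r ≤ n
  · obtain ⟨s, rfl⟩ : ∃ s, n = q + r + s := ⟨n - (q + r), by omega⟩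
    exact ⟨q, 0, r, s, by omega, by ring, by linarith⟩
  · have hqn : q < n := Nat.lt_of_mul_lt_mul_left (a := t + 1) (by omega)
    obtain ⟨s, rfl⟩ : ∃ s, n = q + 1 + s := ⟨n - (q + 1), by omega⟩
    obtain ⟨c, hc⟩ : ∃ c, q + r = t + c := ⟨q + r - t, by omega⟩
    obtain ⟨d, hd⟩ : ∃ d, t + 1 = r + d := ⟨t + 1 - r, by omega⟩
    exact ⟨c, d, 0, s, by omega, by nlinarith, by nlinarith⟩

section Monomials

variable {A : Type*} [CommSemiring A] (x y : A)

def spanMonomialsOfDegree (m : ℕ) : Ideal A :=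
  Ideal.span ((fun ab : ℕ × ℕ => x ^ ab.1 * y ^ ab.2) '' {ab | ab.1 + ab.2 = m})

def cornerIdeal (p : ℕ) : Ideal A :=
  Ideal.span {x ^ p, y ^ p, x ^ (p - 1) * y, x * y ^ (p - 1)}

variable {x y}

lemma pow_mul_pow_mem_spanMonomialsOfDegree {a b m : ℕ} (h : a + b = m) :
    x ^ a * y ^ b ∈ spanMonomialsOfDegree x y m :=
  Ideal.subset_span ⟨(a, b), h, rfl⟩

variable (x y)

lemma spanMonomialsOfDegree_zero : spanMonomialsOfDegree x y 0 = ⊤ :=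
  (Ideal.eq_top_iff_one _).mpr <| by
    simpa using pow_mul_pow_mem_spanMonomialsOfDegree (x := x) (y := y) (zero_add 0)

lemma spanMonomialsOfDegree_mul_le (m k : ℕ) :
    spanMonomialsOfDegree x y m * spanMonomialsOfDegree x y k ≤
      spanMonomialsOfDegree x y (m + k) := by
  rw [spanMonomialsOfDegree, spanMonomialsOfDegree, Ideal.span_mul_span, Ideal.span_le]
  rintro _ ⟨_, ⟨⟨a, b⟩, hab, rfl⟩, _, ⟨⟨c, d⟩, hcd, rfl⟩, rfl⟩
  dsimp only
  rw [SetLike.mem_coe, show x ^ a * y ^ b * (x ^ c * y ^ d) = x ^ (a + c) * y ^ (b + d) by ring]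
  exact pow_mul_pow_mem_spanMonomialsOfDegree (by simp only [Set.mem_ofPred_eq] at hab hcd; omega)

lemma spanMonomialsOfDegree_pow_le (m n : ℕ) :
    spanMonomialsOfDegree x y m ^ n ≤ spanMonomialsOfDegree x y (m * n) := by
  induction n with
  | zero => simp [spanMonomialsOfDegree_zero]
  | succ n ih =>
    calc spanMonomialsOfDegree x y m ^ (n + 1)
        ≤ spanMonomialsOfDegree x y (m * n) * spanMonomialsOfDegree x y m :=
          (pow_succ _ n).trans_le (Ideal.mul_mono_left ih)
      _ ≤ spanMonomialsOfDegree x y (m * (n + 1)) := spanMonomialsOfDegree_mul_le x y _ _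

lemma cornerIdeal_le_spanMonomialsOfDegree (p : ℕ) :
    cornerIdeal x y p ≤ spanMonomialsOfDegree x y p := by
  -- at `p = 0` the truncated `p - 1` breaks the degree count, but the right side is `⊤`
  obtain rfl | hp := Nat.eq_zero_or_pos p
  · simp [spanMonomialsOfDegree_zero]
  rw [cornerIdeal, Ideal.span_le]
  simp only [Set.insert_subset_iff, Set.singleton_subset_iff, SetLike.mem_coe]
  refine ⟨?_, ?_, ?_, ?_⟩
  · simpa using pow_mul_pow_mem_spanMonomialsOfDegree (x := x) (y := y) (add_zero p)
  · simpa using pow_mul_pow_mem_spanMonomialsOfDegree (x := x) (y := y) (zero_add p)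
  · simpa using pow_mul_pow_mem_spanMonomialsOfDegree (x := x) (y := y) (a := p - 1) (b := 1)
      (by omega)
  · simpa using pow_mul_pow_mem_spanMonomialsOfDegree (x := x) (y := y) (a := 1) (b := p - 1)
      (by omega)

lemma cornerIdeal_pow_le_spanMonomialsOfDegree (p n : ℕ) :
    cornerIdeal x y p ^ n ≤ spanMonomialsOfDegree x y (p * n) :=
  (Ideal.pow_right_mono (cornerIdeal_le_spanMonomialsOfDegree x y p) n).trans
    (spanMonomialsOfDegree_pow_le x y p n)

variable {x y}

lemma pow_mul_pow_mem_cornerIdeal_pow {p n a b : ℕ} (hn : p - 2 ≤ n) (hab : a + b = p * n) :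
    x ^ a * y ^ b ∈ cornerIdeal x y p ^ n := by
  obtain ⟨c₀, c₁, c₂, c₃, rfl, rfl, rfl⟩ := exists_corner_exponents hn hab
  have hmem : ∀ z ∈ ({x ^ p, y ^ p, x ^ (p - 1) * y, x * y ^ (p - 1)} : Set A),
      z ∈ cornerIdeal x y p := fun _ hz => Ideal.subset_span hz
  have h₀ := Ideal.pow_mem_pow (hmem (x ^ p) (by simp)) c₀
  have h₁ := Ideal.pow_mem_pow (hmem (x ^ (p - 1) * y) (by simp)) c₁
  have h₂ := Ideal.pow_mem_pow (hmem (x * y ^ (p - 1)) (by simp)) c₂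
  have h₃ := Ideal.pow_mem_pow (hmem (y ^ p) (by simp)) c₃
  rw [pow_add, pow_add, pow_add]
  convert Ideal.mul_mem_mul (Ideal.mul_mem_mul (Ideal.mul_mem_mul h₀ h₁) h₂) h₃ using 1
  ring

lemma spanMonomialsOfDegree_le_cornerIdeal_pow {p n : ℕ} (hn : p - 2 ≤ n) :
    spanMonomialsOfDegree x y (p * n) ≤ cornerIdeal x y p ^ n := by
  rw [spanMonomialsOfDegree, Ideal.span_le]
  rintro _ ⟨⟨a, b⟩, hab, rfl⟩
  exact pow_mul_pow_mem_cornerIdeal_pow hn hab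

theorem cornerIdeal_pow_eq_spanMonomialsOfDegree {p n : ℕ} (hn : p - 2 ≤ n) :
    cornerIdeal x y p ^ n = spanMonomialsOfDegree x y (p * n) :=
  le_antisymm (cornerIdeal_pow_le_spanMonomialsOfDegree x y p n)
    (spanMonomialsOfDegree_le_cornerIdeal_pow hn)

end Monomials

theorem power_equals_all_monomials_of_degree_general
    {K : Type*} [Field K] (p : ℕ)
    (Ip : Ideal (MvPolynomial (Fin 2) K))
    (hIp : Ip = Ideal.span
      {X 0 ^ p, X 1 ^ p, X 0 ^ (p - 1) * X 1, X 0 * X 1 ^ (p - 1)}) :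
    ∀ n : ℕ, p - 2 ≤ n →
      Ip ^ n = Ideal.span
        ((fun ab : ℕ × ℕ => (X 0 : MvPolynomial (Fin 2) K) ^ ab.1 * X 1 ^ ab.2) ''
          {ab | ab.1 + ab.2 = p * n}) := by
  intro n hn
  subst hIp
  exact cornerIdeal_pow_eq_spanMonomialsOfDegree hn

/-- for `p ≥ 4` and `I_p = (X₁^p, X₂^p, X₁^{p−1}X₂, X₁X₂^{p−1})`, for all
`n ≥ p−2` the ideal `I_p^n` equals the ideal generated by all monomials of degree `pn`. -/
theorem power_equals_all_monomials_of_degree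
    {K : Type*} [Field K] (p : ℕ) (hp : 4 ≤ p)
    (Ip : Ideal (MvPolynomial (Fin 2) K))
    (hIp : Ip = Ideal.span
      {X 0 ^ p, X 1 ^ p, X 0 ^ (p - 1) * X 1, X 0 * X 1 ^ (p - 1)}) :
    ∀ n : ℕ, p - 2 ≤ n →
      Ip ^ n = Ideal.span
        ((fun ab : ℕ × ℕ => (X 0 : MvPolynomial (Fin 2) K) ^ ab.1 * X 1 ^ ab.2) ''
          {ab | ab.1 + ab.2 = p * n}) :=
  power_equals_all_monomials_of_degree_general p Ip hIp
end

section
/- Let p ≥ 4 be even, p = 2q, and a ≥ 1. Let I = (X_1^p, X_2^p, X_1^{p−1}X_2, X_1X_2^{p−1}, X_1^{q}X_2^{q}X_3^a) ⊂ K[X_1,X_2,X_3]. Then (X_1^q X_2^q X_3^a)^2 ∈ (X_1^p, X_2^p, X_1^{p−1}X_2, X_1X_2^{p−1})^2, and hence I^{n+1} = (X_1^p, X_2^p, X_1^{p−1}X_2, X_1X_2^{p−1}) I^n for all n ≥ 1. -/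
open MvPolynomial

namespace Ideal

variable {R : Type*} [CommSemiring R]

theorem pow_succ_eq_mul_pow_of_sq_eq_mul {I J : Ideal R} (h : I ^ 2 = J * I) {n : ℕ}
    (hn : 1 ≤ n) : I ^ (n + 1) = J * I ^ n := by
  obtain ⟨m, rfl⟩ := Nat.exists_eq_add_of_le' hn
  calc I ^ (m + 1 + 1) = I ^ 2 * I ^ m := by rw [← pow_add, add_comm 2, add_assoc]
    _ = J * I ^ (m + 1) := by rw [h, mul_assoc, ← pow_succ']

theorem sq_sup_span_singleton_eq_mul {J : Ideal R} {f : R}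
    (hf : f ^ 2 ∈ J * (J ⊔ span {f})) :
    (J ⊔ span {f}) ^ 2 = J * (J ⊔ span {f}) := by
  set I := J ⊔ span {f}
  refine le_antisymm ?_ (sq I ▸ mul_mono_left le_sup_left)
  have hfJ : span {f} * J ≤ J * I := mul_comm J (span {f}) ▸ mul_mono_right le_sup_right
  have hff : span {f} * span {f} ≤ J * I := by
    rwa [span_singleton_mul_span_singleton, span_singleton_le_iff_mem, ← sq]
  calc I ^ 2 = J * I ⊔ (span {f} * J ⊔ span {f} * span {f}) := by
        rw [sq, sup_mul, mul_sup (span {f})]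
    _ ≤ J * I := sup_le le_rfl (sup_le hfJ hff)

end Ideal

theorem reduction_number_one_even_case_general
    {K : Type*} [Field K] (p q a : ℕ) (hpq : p = 2 * q)
    (Ip I : Ideal (MvPolynomial (Fin 3) K))
    (hIp : Ip = Ideal.span
      {X 0 ^ p, X 1 ^ p, X 0 ^ (p - 1) * X 1, X 0 * X 1 ^ (p - 1)})
    (hI : I = Ideal.span
      {X 0 ^ p, X 1 ^ p, X 0 ^ (p - 1) * X 1, X 0 * X 1 ^ (p - 1),
        X 0 ^ q * X 1 ^ q * X 2 ^ a}) :
    ((X 0 : MvPolynomial (Fin 3) K) ^ q * X 1 ^ q * X 2 ^ a) ^ 2 ∈ Ip ^ 2 ∧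
    ∀ n : ℕ, 1 ≤ n → I ^ (n + 1) = Ip * I ^ n := by
  set f : MvPolynomial (Fin 3) K := X 0 ^ q * X 1 ^ q * X 2 ^ a
  have hf : f ^ 2 = X 2 ^ (2 * a) * (X 0 ^ p * X 1 ^ p) := by rw [hpq]; ring
  have hf2 : f ^ 2 ∈ Ip ^ 2 := by
    rw [hf, sq Ip, hIp]
    exact Ideal.mul_mem_left _ _
      (Ideal.mul_mem_mul (Ideal.subset_span (by simp)) (Ideal.subset_span (by simp)))
  have hsup : I = Ip ⊔ Ideal.span {f} := by
    rw [hI, hIp, ← Ideal.span_union, Set.insert_union, Set.insert_union, Set.insert_union,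
      Set.pair_comm, Set.union_singleton]
  have hsq : I ^ 2 = Ip * I := by
    rw [hsup]
    exact Ideal.sq_sup_span_singleton_eq_mul (Ideal.mul_mono_right le_sup_left (sq Ip ▸ hf2))
  exact ⟨hf2, fun n hn => Ideal.pow_succ_eq_mul_pow_of_sq_eq_mul hsq hn⟩

/-- for even `p = 2q ≥ 4` and `a ≥ 1`, with
`I = (X₁^p, X₂^p, X₁^{p−1}X₂, X₁X₂^{p−1}, X₁^qX₂^qX₃^a)` in `K[X₁,X₂,X₃]`,
one has `(X₁^qX₂^qX₃^a)² ∈ (X₁^p, X₂^p, X₁^{p−1}X₂, X₁X₂^{p−1})²` and hence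
`I^{n+1} = (X₁^p, X₂^p, X₁^{p−1}X₂, X₁X₂^{p−1})·I^n` for all `n ≥ 1`. -/
theorem reduction_number_one_even_case
    {K : Type*} [Field K] (p q a : ℕ) (hp : 4 ≤ p) (hpq : p = 2 * q) (ha : 1 ≤ a)
    (Ip I : Ideal (MvPolynomial (Fin 3) K))
    (hIp : Ip = Ideal.span
      {X 0 ^ p, X 1 ^ p, X 0 ^ (p - 1) * X 1, X 0 * X 1 ^ (p - 1)})
    (hI : I = Ideal.span
      {X 0 ^ p, X 1 ^ p, X 0 ^ (p - 1) * X 1, X 0 * X 1 ^ (p - 1),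
        X 0 ^ q * X 1 ^ q * X 2 ^ a}) :
    ((X 0 : MvPolynomial (Fin 3) K) ^ q * X 1 ^ q * X 2 ^ a) ^ 2 ∈ Ip ^ 2 ∧
    ∀ n : ℕ, 1 ≤ n → I ^ (n + 1) = Ip * I ^ n :=
  reduction_number_one_even_case_general p q a hpq Ip I hIp hI
end

section
/- Let I ⊂ K[X] and J ⊂ K[Y] be nonzero proper homogeneous ideals in polynomial rings over disjoint sets of variables X and Y, with minimal homogeneous generating sets {f_1,...,f_t} and {g_1,...,g_u} respectively. Then {f_i g_j : 1 ≤ i ≤ t, 1 ≤ j ≤ u} is a minimal generating set of the product ideal I·J·K[X,Y]. In particular, μ(IJ) = μ(I)μ(J) and d(IJ) = d(I) + d(J). -/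
open MvPolynomial

/-- The minimal number of generators `μ(I)` of an ideal. -/
noncomputable def mu {K : Type*} [Field K] {σ : Type*}
    (I : Ideal (MvPolynomial σ K)) : ℕ :=
  sInf {n | ∃ g : Fin n → MvPolynomial σ K, I = Ideal.span (Set.range g)}

/-!
Minimality of the products is a tensor-product fact. Under `K[X] ⊗ K[Y] ≅ K[X,Y]` the
surjection onto `K[X]/(f_{i'} : i' ≠ i) ⊗ K[Y]/(g_{j'} : j' ≠ j)` kills every `f_{i'} g_{j'}`
with `(i', j') ≠ (i, j)`, but not `f_i ⊗ g_j`, which is a tensor of two nonzero vectors.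

For a minimal homogeneous generating family of an ideal `I`, taking homogeneous components shows
that no generator lies in `(others) + 𝔪 I`, where `𝔪 = (X)`. So the generators are linearly
independent in `K[X]/𝔪 I`, while every generating family of `I` spans the image of `I` there over
`K`: this is graded Nakayama, giving `μ(I) = #generators`. Components also show that an element
of `I` of degree `≤ D` lies in the ideal of the generators of degree `≤ D`, so `d(I)` is the
largest generator degree. Both counts are then read off the family `f_i g_j`.
-/

namespace MvPolynomial

section CommSemiring

variable {R σ ι : Type*} [CommSemiring R]

attribute [local instance] MvPolynomial.gradedAlgebra in
theorem homogeneousComponent_mul_of_isHomogeneous {p q : MvPolynomial σ R} {k : ℕ}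
    (hq : q.IsHomogeneous k) (n : ℕ) :
    homogeneousComponent n (p * q) =
      if k ≤ n then homogeneousComponent (n - k) p * q else 0 := by
  simpa only [← decomposition.decompose'_apply, DirectSum.Decomposition.decompose'_eq] using
    DirectSum.coe_decompose_mul_of_right_mem (homogeneousSubmodule σ R) n
      ((mem_homogeneousSubmodule k q).mpr hq)

theorem homogeneousComponent_mem_span_image {f : ι → MvPolynomial σ R} {d : ι → ℕ}
    (hf : ∀ i, (f i).IsHomogeneous (d i)) {S : Set ι} {p : MvPolynomial σ R}
    (hp : p ∈ Ideal.span (f '' S)) (n : ℕ) :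
    homogeneousComponent n p ∈ Ideal.span (f '' {j | j ∈ S ∧ d j ≤ n}) := by
  obtain ⟨l, hl, rfl⟩ := (Finsupp.mem_span_image_iff_linearCombination _).mp hp
  rw [Finsupp.linearCombination_apply, map_finsuppSum]
  refine Submodule.finsuppSum_mem _ _ _ _ fun j hj => ?_
  rw [smul_eq_mul, homogeneousComponent_mul_of_isHomogeneous (hf j)]
  split_ifs with hle
  · have hjS : j ∈ S := hl (Finsupp.mem_support_iff.mpr hj)
    exact Ideal.mul_mem_left _ _ (Ideal.subset_span ⟨j, ⟨hjS, hle⟩, rfl⟩)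
  · exact zero_mem _

theorem mem_span_image_degree_le_totalDegree {f : ι → MvPolynomial σ R} {d : ι → ℕ}
    (hf : ∀ i, (f i).IsHomogeneous (d i)) {p : MvPolynomial σ R}
    (hp : p ∈ Ideal.span (Set.range f)) :
    p ∈ Ideal.span (f '' {j | d j ≤ p.totalDegree}) := by
  rw [← Set.image_univ] at hp
  have hsum : ∑ n ∈ Finset.range (p.totalDegree + 1), homogeneousComponent n p ∈
      Ideal.span (f '' {j | d j ≤ p.totalDegree}) :=
    sum_mem fun n hn => Ideal.span_mono (Set.image_mono fun j hj =>
        hj.2.trans (Nat.lt_succ_iff.mp (Finset.mem_range.mp hn)))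
      (homogeneousComponent_mem_span_image hf hp n)
  rwa [sum_homogeneousComponent] at hsum

theorem idealOfVars_mul_span_range (f : ι → MvPolynomial σ R) :
    idealOfVars σ R * Ideal.span (Set.range f) =
      Ideal.span (Set.range fun q : σ × ι => X q.1 * f q.2) := by
  rw [Ideal.span_mul_span', ← Set.image2_mul, Set.image2_range]

end CommSemiring

section CommRing

variable {R σ τ ι κ : Type*} [CommRing R]

theorem sub_C_coeff_zero_mem_idealOfVars (a : MvPolynomial σ R) :
    a - C (coeff 0 a) ∈ idealOfVars σ R := by
  rw [← pow_one (idealOfVars σ R), mem_pow_idealOfVars_iff']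
  intro x hx
  rw [Nat.lt_one_iff, Finsupp.degree_eq_zero_iff] at hx
  simp [hx]

theorem tensorEquivSum_tmul (p : MvPolynomial σ R) (q : MvPolynomial τ R) :
    tensorEquivSum R σ τ R (p ⊗ₜ q) = rename Sum.inl p * rename Sum.inr q := by
  have hl : (tensorEquivSum R σ τ R).toAlgHom.comp Algebra.TensorProduct.includeLeft =
      rename Sum.inl := algHom_ext fun i => by simp
  have hr : (tensorEquivSum R σ τ R).toAlgHom.comp Algebra.TensorProduct.includeRight =
      rename Sum.inr := algHom_ext fun i => by simp
  rw [← mul_one p, ← one_mul q, ← Algebra.TensorProduct.tmul_mul_tmul, map_mul, mul_one, one_mul,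
    ← DFunLike.congr_fun hl p, ← DFunLike.congr_fun hr q]
  rfl

theorem map_rename_inl_mul_map_rename_inr (f : ι → MvPolynomial σ R) (g : κ → MvPolynomial τ R) :
    Ideal.map (rename Sum.inl) (Ideal.span (Set.range f)) *
        Ideal.map (rename (Sum.inr : τ → σ ⊕ τ)) (Ideal.span (Set.range g)) =
      Ideal.span (Set.range fun q : ι × κ => rename Sum.inl (f q.1) * rename Sum.inr (g q.2)) := by
  rw [Ideal.map_span, Ideal.map_span, Ideal.span_mul_span', ← Set.range_comp, ← Set.range_comp,
    ← Set.image2_mul, Set.image2_range]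
  rfl

end CommRing

theorem mkₐ_mem_span_image_of_mem_span {K σ : Type*} [Field K] (S : Set (MvPolynomial σ K))
    {x : MvPolynomial σ K} (hx : x ∈ Ideal.span S) :
    Ideal.Quotient.mkₐ K (idealOfVars σ K * Ideal.span S) x ∈
      Submodule.span K (Ideal.Quotient.mkₐ K (idealOfVars σ K * Ideal.span S) '' S) := by
  set mk := Ideal.Quotient.mkₐ K (idealOfVars σ K * Ideal.span S)
  induction hx using Submodule.span_induction with
  | mem x hx => exact Submodule.subset_span ⟨x, hx, rfl⟩
  | zero => simp
  | add x y _ _ hx hy => rw [map_add]; exact add_mem hx hy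
  | smul a x hx ih =>
    have hconst : mk (a * x) = coeff 0 a • mk x := by
      rw [← sub_eq_zero, ← map_smul, ← map_sub, Ideal.Quotient.mkₐ_eq_mk,
        Ideal.Quotient.eq_zero_iff_mem, smul_eq_C_mul, ← sub_mul]
      exact Ideal.mul_mem_mul (sub_C_coeff_zero_mem_idealOfVars a) hx
    rw [smul_eq_mul, hconst]
    exact Submodule.smul_mem _ _ ih

end MvPolynomial

theorem TensorProduct.tmul_ne_zero_of_field {K V W : Type*} [Field K] [AddCommGroup V]
    [Module K V] [AddCommGroup W] [Module K W] {v : V} {w : W} (hv : v ≠ 0) (hw : w ≠ 0) :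
    v ⊗ₜ[K] w ≠ 0 := by
  obtain ⟨φ, hφ⟩ : ∃ φ : Module.Dual K V, φ v ≠ 0 := by
    by_contra! h
    exact hv ((Module.forall_dual_apply_eq_zero_iff K v).mp h)
  obtain ⟨ψ, hψ⟩ : ∃ ψ : Module.Dual K W, ψ w ≠ 0 := by
    by_contra! h
    exact hw ((Module.forall_dual_apply_eq_zero_iff K w).mp h)
  intro h
  have := congrArg ((TensorProduct.lid K K).toLinearMap ∘ₗ TensorProduct.map φ ψ) h
  simp [hφ, hψ] at this

theorem nonempty_of_span_range_ne_bot {R ι : Type*} [Semiring R] {f : ι → R}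
    (h : Ideal.span (Set.range f) ≠ ⊥) : Nonempty ι := by
  by_contra hι
  rw [not_nonempty_iff] at hι
  exact h (by rw [Set.range_eq_empty, Ideal.span_empty])

/-- `f` is a minimal generating family of the ideal it spans. -/
def IsIrredundant {R ι : Type*} [Semiring R] (f : ι → R) : Prop :=
  ∀ i, f i ∉ Ideal.span (f '' {j | j ≠ i})

namespace IsIrredundant

section Homogeneous

variable {K σ ι : Type*} [Field K] {f : ι → MvPolynomial σ K} {d : ι → ℕ}

theorem notMem_span_sup_idealOfVars_mul (hf : ∀ i, (f i).IsHomogeneous (d i))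
    (hirr : IsIrredundant f) (i : ι) :
    f i ∉ Ideal.span (f '' {j | j ≠ i}) ⊔ idealOfVars σ K * Ideal.span (Set.range f) := by
  intro h
  obtain ⟨y, hy, z, hz, hyz⟩ := Submodule.mem_sup.mp h
  rw [idealOfVars_mul_span_range, ← Set.image_univ] at hz
  apply hirr i
  rw [← homogeneousComponent_eq_self (hf i), ← hyz, map_add]
  refine add_mem (Ideal.span_mono (Set.image_mono fun j hj => hj.1)
    (homogeneousComponent_mem_span_image hf hy _)) ?_
  have hXf : ∀ q : σ × ι, (X q.1 * f q.2).IsHomogeneous (d q.2 + 1) := fun q => by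
    simpa only [add_comm] using (isHomogeneous_X K q.1).mul (hf q.2)
  refine Ideal.span_le.mpr ?_ (homogeneousComponent_mem_span_image hXf hz _)
  rintro _ ⟨q, ⟨-, hq⟩, rfl⟩
  exact Ideal.mul_mem_left _ _ (Ideal.subset_span ⟨q.2, by rintro rfl; omega, rfl⟩)

theorem linearIndependent_mkₐ (hf : ∀ i, (f i).IsHomogeneous (d i)) (hirr : IsIrredundant f) :
    LinearIndependent K
      (fun i => Ideal.Quotient.mkₐ K (idealOfVars σ K * Ideal.span (Set.range f)) (f i)) := by
  set N := idealOfVars σ K * Ideal.span (Set.range f)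
  rw [linearIndependent_iff_notMem_span]
  intro i hi
  have himage : (fun j => Ideal.Quotient.mkₐ K N (f j)) '' (Set.univ \ {i}) =
      (Ideal.Quotient.mkₐ K N).toLinearMap '' (f '' {j | j ≠ i}) := by
    ext; simp
  rw [himage, ← Submodule.map_span] at hi
  obtain ⟨y, hy, hyi⟩ := hi
  refine hirr.notMem_span_sup_idealOfVars_mul hf i ?_
  rw [← add_sub_cancel y (f i)]
  refine Submodule.add_mem_sup ?_ ?_
  · exact Submodule.span_le_restrictScalars K _ _ hy
  · exact Ideal.Quotient.eq.mp (by simpa using hyi.symm)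

variable [Fintype ι]

theorem card_le (hf : ∀ i, (f i).IsHomogeneous (d i)) (hirr : IsIrredundant f)
    {κ : Type*} [Fintype κ] (h : κ → MvPolynomial σ K)
    (hfh : Ideal.span (Set.range f) = Ideal.span (Set.range h)) :
    Fintype.card ι ≤ Fintype.card κ := by
  classical
  have hind : LinearIndependent K fun i =>
      Ideal.Quotient.mkₐ K (idealOfVars σ K * Ideal.span (Set.range h)) (f i) :=
    hfh ▸ hirr.linearIndependent_mkₐ hf
  calc Fintype.card ι ≤ Fintype.card (Set.range fun k =>
        Ideal.Quotient.mkₐ K (idealOfVars σ K * Ideal.span (Set.range h)) (h k)) := by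
        refine linearIndependent_le_span_aux' _ hind _ ?_
        rintro _ ⟨i, rfl⟩
        rw [Set.range_comp' _ h]
        exact mkₐ_mem_span_image_of_mem_span _ (hfh ▸ Ideal.subset_span ⟨i, rfl⟩)
    _ ≤ Fintype.card κ := Fintype.card_range_le _

theorem mu_span_range (hf : ∀ i, (f i).IsHomogeneous (d i)) (hirr : IsIrredundant f) :
    mu (Ideal.span (Set.range f)) = Fintype.card ι := by
  have hcard : Fintype.card ι ∈
      {n | ∃ g : Fin n → MvPolynomial σ K, Ideal.span (Set.range f) = Ideal.span (Set.range g)} :=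
    ⟨f ∘ (Fintype.equivFin ι).symm, by rw [Set.range_comp, Equiv.range_eq_univ, Set.image_univ]⟩
  refine le_antisymm (Nat.sInf_le hcard) (le_csInf ⟨_, hcard⟩ ?_)
  rintro n ⟨g, hg⟩
  simpa using hirr.card_le hf g hg

theorem maxGenDeg_span_range (hf : ∀ i, (f i).IsHomogeneous (d i)) (hirr : IsIrredundant f) :
    maxGenDeg (Ideal.span (Set.range f)) = Finset.univ.sup d := by
  set I := Ideal.span (Set.range f)
  have hgen : I = Ideal.span {p | p ∈ I ∧ p.totalDegree ≤ Finset.univ.sup d} := by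
    refine le_antisymm (Ideal.span_le.mpr ?_) (Ideal.span_le.mpr fun p hp => hp.1)
    rintro _ ⟨i, rfl⟩
    exact Ideal.subset_span ⟨Ideal.subset_span ⟨i, rfl⟩,
      (hf i).totalDegree_le.trans (Finset.le_sup (Finset.mem_univ i))⟩
  refine le_antisymm (Nat.sInf_le hgen) (le_csInf ⟨_, hgen⟩ fun D hD => ?_)
  refine Finset.sup_le fun i _ => ?_
  by_contra! hlt
  apply hirr i
  have hfi : f i ∈ Ideal.span {p | p ∈ I ∧ p.totalDegree ≤ D} :=
    (hD : I = _) ▸ Ideal.subset_span ⟨i, rfl⟩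
  refine Ideal.span_le.mpr (fun p hp => ?_) hfi
  refine Ideal.span_mono (Set.image_mono fun j hj => ?_)
    (mem_span_image_degree_le_totalDegree hf hp.1)
  rintro rfl
  exact (hj.trans hp.2).not_gt hlt

end Homogeneous

theorem map_ringEquiv {R S ι : Type*} [CommSemiring R] [CommSemiring S] {f : ι → R}
    (hf : IsIrredundant f) (e : R ≃+* S) : IsIrredundant fun i => e (f i) := by
  intro i hi
  rw [← Set.image_image e f, ← Ideal.map_span] at hi
  obtain ⟨x, hx, hex⟩ := (Ideal.mem_map_of_equiv e _).mp hi
  exact hf i (e.injective hex ▸ hx)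

theorem tmul {K A B ι κ : Type*} [Field K] [CommRing A] [Algebra K A] [CommRing B] [Algebra K B]
    {f : ι → A} {g : κ → B} (hf : IsIrredundant f) (hg : IsIrredundant g) :
    IsIrredundant fun q : ι × κ => f q.1 ⊗ₜ[K] g q.2 := by
  rintro ⟨i, j⟩ hmem
  set φ := Algebra.TensorProduct.map (Ideal.Quotient.mkₐ K (Ideal.span (f '' {i' | i' ≠ i})))
    (Ideal.Quotient.mkₐ K (Ideal.span (g '' {j' | j' ≠ j})))
  have hker : Ideal.span ((fun q : ι × κ => f q.1 ⊗ₜ[K] g q.2) '' {q | q ≠ (i, j)}) ≤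
      RingHom.ker φ := by
    refine Ideal.span_le.mpr ?_
    rintro _ ⟨⟨i', j'⟩, hne, rfl⟩
    by_cases hi : i' = i
    · subst hi
      have hj : j' ≠ j := fun hj => hne (by rw [hj])
      have h0 : Ideal.Quotient.mkₐ K (Ideal.span (g '' {j' | j' ≠ j})) (g j') = 0 :=
        Ideal.Quotient.eq_zero_iff_mem.mpr (Ideal.subset_span ⟨j', hj, rfl⟩)
      exact RingHom.mem_ker.mpr (by
        simp only [φ, Algebra.TensorProduct.map_tmul, h0, TensorProduct.tmul_zero])
    · have h0 : Ideal.Quotient.mkₐ K (Ideal.span (f '' {i' | i' ≠ i})) (f i') = 0 :=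
        Ideal.Quotient.eq_zero_iff_mem.mpr (Ideal.subset_span ⟨i', hi, rfl⟩)
      exact RingHom.mem_ker.mpr (by
        simp only [φ, Algebra.TensorProduct.map_tmul, h0, TensorProduct.zero_tmul])
  refine TensorProduct.tmul_ne_zero_of_field (fun h => hf i ?_) (fun h => hg j ?_) (hker hmem :)
  · exact Ideal.Quotient.eq_zero_iff_mem.mp h
  · exact Ideal.Quotient.eq_zero_iff_mem.mp h

theorem rename_inl_mul_rename_inr {K σ τ ι κ : Type*} [Field K]
    {f : ι → MvPolynomial σ K} {g : κ → MvPolynomial τ K} (hf : IsIrredundant f)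
    (hg : IsIrredundant g) :
    IsIrredundant fun q : ι × κ => rename Sum.inl (f q.1) * rename Sum.inr (g q.2) := by
  simpa only [AlgEquiv.coe_ringEquiv, tensorEquivSum_tmul] using
    (hf.tmul hg).map_ringEquiv (tensorEquivSum K σ τ K).toRingEquiv

end IsIrredundant

theorem product_of_ideals_disjoint_variables_general
    {K : Type*} [Field K] (s u t w : ℕ)
    (f : Fin t → MvPolynomial (Fin s) K) (g : Fin w → MvPolynomial (Fin u) K)
    (df : Fin t → ℕ) (dg : Fin w → ℕ)
    (hf : ∀ i, (f i).IsHomogeneous (df i)) (hg : ∀ j, (g j).IsHomogeneous (dg j))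
    (I : Ideal (MvPolynomial (Fin s) K)) (hI : I = Ideal.span (Set.range f))
    (J : Ideal (MvPolynomial (Fin u) K)) (hJ : J = Ideal.span (Set.range g))
    (hIne : I ≠ ⊥) (hJne : J ≠ ⊥)
    (hfmin : ∀ i, f i ∉ Ideal.span (f '' {i' | i' ≠ i}))
    (hgmin : ∀ j, g j ∉ Ideal.span (g '' {j' | j' ≠ j}))
    (IJ : Ideal (MvPolynomial (Fin s ⊕ Fin u) K))
    (hIJ : IJ = Ideal.map (rename (Sum.inl : Fin s → Fin s ⊕ Fin u)) I *
                Ideal.map (rename (Sum.inr : Fin u → Fin s ⊕ Fin u)) J)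
    (F : Fin t × Fin w → MvPolynomial (Fin s ⊕ Fin u) K)
    (hF : F = fun ij => rename Sum.inl (f ij.1) * rename Sum.inr (g ij.2)) :
    IJ = Ideal.span (Set.range F) ∧
    (∀ q : Fin t × Fin w, F q ∉ Ideal.span (F '' {q' | q' ≠ q})) ∧
    mu IJ = mu I * mu J ∧
    maxGenDeg IJ = maxGenDeg I + maxGenDeg J := by
  subst hI hJ hIJ hF
  have hspan := map_rename_inl_mul_map_rename_inr f g
  have hirr := IsIrredundant.rename_inl_mul_rename_inr hfmin hgmin
  have hhom : ∀ q : Fin t × Fin w,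
      (rename Sum.inl (f q.1) * rename Sum.inr (g q.2) : MvPolynomial (Fin s ⊕ Fin u) K)
        |>.IsHomogeneous (df q.1 + dg q.2) :=
    fun q => (hf q.1).rename_isHomogeneous.mul (hg q.2).rename_isHomogeneous
  have := nonempty_of_span_range_ne_bot hIne
  have := nonempty_of_span_range_ne_bot hJne
  refine ⟨hspan, hirr, ?_, ?_⟩
  · rw [hspan, hirr.mu_span_range hhom, IsIrredundant.mu_span_range hf hfmin,
      IsIrredundant.mu_span_range hg hgmin, Fintype.card_prod]
  · rw [hspan, hirr.maxGenDeg_span_range hhom, IsIrredundant.maxGenDeg_span_range hf hfmin,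
      IsIrredundant.maxGenDeg_span_range hg hgmin,
      Finset.sup_add_sup Finset.univ_nonempty Finset.univ_nonempty, Finset.univ_product_univ]

/-- if `{f_i}` and `{g_j}` are minimal homogeneous generating sets of
ideals `I ⊆ K[X]` and `J ⊆ K[Y]` in disjoint sets of variables, then `{f_i g_j}` is a
minimal generating set of `IJ ⊆ K[X,Y]`; in particular `μ(IJ) = μ(I)μ(J)` and
`d(IJ) = d(I) + d(J)`. -/
theorem product_of_ideals_disjoint_variables
    {K : Type*} [Field K] (s u t w : ℕ)
    (f : Fin t → MvPolynomial (Fin s) K) (g : Fin w → MvPolynomial (Fin u) K)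
    (df : Fin t → ℕ) (dg : Fin w → ℕ)
    (hf : ∀ i, (f i).IsHomogeneous (df i)) (hg : ∀ j, (g j).IsHomogeneous (dg j))
    (I : Ideal (MvPolynomial (Fin s) K)) (hI : I = Ideal.span (Set.range f))
    (J : Ideal (MvPolynomial (Fin u) K)) (hJ : J = Ideal.span (Set.range g))
    (hIne : I ≠ ⊥) (hIpr : I ≠ ⊤) (hJne : J ≠ ⊥) (hJpr : J ≠ ⊤)
    (hfmin : ∀ i, f i ∉ Ideal.span (f '' {i' | i' ≠ i}))
    (hgmin : ∀ j, g j ∉ Ideal.span (g '' {j' | j' ≠ j}))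
    (IJ : Ideal (MvPolynomial (Fin s ⊕ Fin u) K))
    (hIJ : IJ = Ideal.map (rename (Sum.inl : Fin s → Fin s ⊕ Fin u)) I *
                Ideal.map (rename (Sum.inr : Fin u → Fin s ⊕ Fin u)) J)
    (F : Fin t × Fin w → MvPolynomial (Fin s ⊕ Fin u) K)
    (hF : F = fun ij => rename Sum.inl (f ij.1) * rename Sum.inr (g ij.2)) :
    IJ = Ideal.span (Set.range F) ∧
    (∀ q : Fin t × Fin w, F q ∉ Ideal.span (F '' {q' | q' ≠ q})) ∧
    mu IJ = mu I * mu J ∧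
    maxGenDeg IJ = maxGenDeg I + maxGenDeg J :=
  product_of_ideals_disjoint_variables_general s u t w f g df dg hf hg I hI J hJ hIne hJne hfmin
    hgmin IJ hIJ F hF
end

section
/- Let I be a monomial ideal of K[X_1,...,X_s] and δ(I) the maximal ℓ¹-norm of a vertex of the Newton polyhedron NP(I). Then d(I^n) ≥ δ(I)·n for all n ≥ 1. -/
open MvPolynomial

/-- The Newton polyhedron `NP(I) = conv(E(I))` of a monomial ideal: the convex hull of
the set of exponents of monomials belonging to `I`. -/
def newtonPolyhedron {K : Type*} [Field K] (s : ℕ)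
    (I : Ideal (MvPolynomial (Fin s) K)) : Set (Fin s → ℝ) :=
  convexHull ℝ {x | ∃ α : Fin s →₀ ℕ, monomial α (1 : K) ∈ I ∧ x = fun i => (α i : ℝ)}

/-!
Let `α` be a vertex of `NP(I)` with `|α| = δ`. If `I^n` is generated in degrees `≤ d`, then,
since `X^{nα} ∈ I^n`, some exponent `β` of a generator divides `nα` and has `|β| ≤ d`. As `I` is
monomial, `β ≥ f₁ + ⋯ + fₙ` with every `X^{fᵢ} ∈ I`. Writing `w = nα - ∑ fᵢ`, the point `α` is a
proper convex combination of `α + w` and the mean of the `fᵢ`, both in `NP(I)`; as `α` is a vertex,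
`w = 0`, so `β = nα` and `d ≥ |nα| = nδ`.
-/

namespace MvPolynomial

variable {R σ : Type*} [CommSemiring R]

theorem exists_le_of_mem_support_of_mem_span {T : Set (MvPolynomial σ R)} {p : MvPolynomial σ R}
    (hp : p ∈ Ideal.span T) {β : σ →₀ ℕ} (hβ : β ∈ p.support) :
    ∃ g ∈ T, ∃ β₀ ∈ g.support, β₀ ≤ β := by
  classical
  induction hp using Submodule.span_induction generalizing β with
  | mem g hg => exact ⟨g, hg, β, hβ, le_rfl⟩
  | zero => simp at hβ
  | add p q _ _ ihp ihq =>
    rcases Finset.mem_union.1 (support_add hβ) with h | h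
    exacts [ihp h, ihq h]
  | smul a p _ ih =>
    obtain ⟨γ, -, β', hβ', rfl⟩ := Finset.mem_add.1 (support_mul a p hβ)
    obtain ⟨g, hg, β₀, hβ₀, hle⟩ := ih hβ'
    exact ⟨g, hg, β₀, hβ₀, le_add_left hle⟩

theorem degree_le_totalDegree [Fintype σ] {p : MvPolynomial σ R} {β : σ →₀ ℕ}
    (hβ : β ∈ p.support) : β.degree ≤ p.totalDegree := by
  rw [Finsupp.degree_eq_sum, ← Finsupp.sum_fintype β (fun _ e => e) fun _ => rfl]
  exact le_totalDegree hβ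

theorem _root_.Ideal.FG.exists_eq_span_totalDegree_le {I : Ideal (MvPolynomial σ R)}
    (hI : I.FG) : ∃ d, I = Ideal.span {f | f ∈ I ∧ f.totalDegree ≤ d} := by
  obtain ⟨T, rfl⟩ := hI
  refine ⟨T.sup totalDegree, le_antisymm (Ideal.span_mono fun g hg => ?_) ?_⟩
  · exact ⟨Ideal.subset_span hg, Finset.le_sup hg⟩
  · exact Ideal.span_le.2 fun g hg => hg.1

end MvPolynomial

section

variable {K : Type*} [Field K]

theorem IsMonomialIdeal.exists_sum_le_of_mem_support_pow {σ : Type*}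
    {I : Ideal (MvPolynomial σ K)} (hI : IsMonomialIdeal I) {n : ℕ} {p : MvPolynomial σ K}
    (hp : p ∈ I ^ n) {β : σ →₀ ℕ} (hβ : β ∈ p.support) :
    ∃ f : Fin n → σ →₀ ℕ, (∀ i, monomial (f i) (1 : K) ∈ I) ∧ ∑ i, f i ≤ β := by
  classical
  obtain ⟨S, rfl⟩ := hI
  rw [Ideal.span, Submodule.span_pow] at hp
  obtain ⟨g, hg, β₀, hβ₀, hle⟩ := exists_le_of_mem_support_of_mem_span hp hβ
  obtain ⟨m, rfl⟩ := Set.mem_pow.1 hg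
  choose f hfS hf using fun i => (m i).2
  rw [List.prod_ofFn, ← Finset.prod_congr rfl fun i _ => hf i, ← monomial_sum_one,
    support_monomial, if_neg one_ne_zero, Finset.mem_singleton] at hβ₀
  exact ⟨f, fun i => Ideal.subset_span ⟨f i, hfS i, rfl⟩, hβ₀ ▸ hle⟩

/-- `x` lies in the open segment between `y` and `x + t • (x - y)`. -/
theorem eq_of_mem_extremePoints_of_add_smul_sub_mem {E : Type*} [AddCommGroup E] [Module ℝ E]
    {C : Set E} {x y : E} (hx : x ∈ C.extremePoints ℝ) (hy : y ∈ C) {t : ℝ} (ht : 0 < t)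
    (hz : x + t • (x - y) ∈ C) : y = x := by
  refine (mem_extremePoints_iff_left.1 hx).2 y hy _ hz
    ⟨t / (1 + t), 1 / (1 + t), by positivity, by positivity, by field_simp; ring, ?_⟩
  match_scalars <;> field_simp; ring

theorem le_maxGenDeg {σ : Type*} {I : Ideal (MvPolynomial σ K)} (hI : I.FG) {m : ℕ}
    (h : ∀ d, I = Ideal.span {f | f ∈ I ∧ f.totalDegree ≤ d} → m ≤ d) : m ≤ maxGenDeg I :=
  le_csInf hI.exists_eq_span_totalDegree_le h

theorem sum_eq_nsmul_of_mem_extremePoints_newtonPolyhedron {s : ℕ}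
    {I : Ideal (MvPolynomial (Fin s) K)} {α : Fin s →₀ ℕ}
    (hα : (fun i => (α i : ℝ)) ∈ (newtonPolyhedron s I).extremePoints ℝ)
    (hαI : monomial α (1 : K) ∈ I) {n : ℕ} (hn : n ≠ 0) {f : Fin n → Fin s →₀ ℕ}
    (hf : ∀ i, monomial (f i) (1 : K) ∈ I) (hle : ∑ i, f i ≤ n • α) : ∑ i, f i = n • α := by
  have hmem : ∀ β, monomial β (1 : K) ∈ I → (fun j => (β j : ℝ)) ∈ newtonPolyhedron s I :=
    fun β hβ => subset_convexHull ℝ _ ⟨β, hβ, rfl⟩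
  set w := n • α - ∑ i, f i
  have hw : ∑ i, f i + w = n • α := add_tsub_cancel_of_le hle
  have hαw : monomial (α + w) (1 : K) ∈ I := by
    simpa [monomial_mul] using I.mul_mem_right (monomial w 1) hαI
  have hmean : ∑ i, (n : ℝ)⁻¹ • (fun j => (f i j : ℝ)) ∈ newtonPolyhedron s I :=
    (convex_convexHull ℝ _).sum_mem (fun _ _ => by positivity) (by simp [hn])
      fun i _ => hmem _ (hf i)
  have hαw' : (fun j => (α j : ℝ)) + (n : ℝ) • ((fun j => (α j : ℝ)) -
      ∑ i, (n : ℝ)⁻¹ • (fun j => (f i j : ℝ))) = fun j => ((α + w) j : ℝ) := by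
    funext j
    have := congrArg (fun β : Fin s →₀ ℕ => (β j : ℝ)) hw
    simp only [Finsupp.add_apply, Finsupp.coe_finsetSum, Finset.sum_apply, Finsupp.smul_apply,
      smul_eq_mul, Nat.cast_add, Nat.cast_sum, Nat.cast_mul] at this
    simp only [Pi.add_apply, Pi.smul_apply, Pi.sub_apply, Finset.sum_apply, smul_eq_mul,
      Finsupp.add_apply, Nat.cast_add, ← Finset.mul_sum]
    field_simp
    linarith
  have key := eq_of_mem_extremePoints_of_add_smul_sub_mem hα hmean (by positivity)
    (hαw' ▸ hmem _ hαw)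
  ext j
  have := congrFun key j
  simp only [Finset.sum_apply, Pi.smul_apply, smul_eq_mul, ← Finset.mul_sum] at this
  field_simp at this
  simpa using (by exact_mod_cast this : ∑ i, f i j = n * α j)

end

theorem maxGenDeg_ge_delta_mul_general
    {K : Type*} [Field K] (s : ℕ) (I : Ideal (MvPolynomial (Fin s) K))
    (hI : IsMonomialIdeal I)
    (δ : ℕ)
    (hδ : IsGreatest ((fun x : Fin s → ℝ => ∑ i, x i) ''
      Set.extremePoints ℝ (newtonPolyhedron s I)) (δ : ℝ)) :
    ∀ n : ℕ, 1 ≤ n → δ * n ≤ maxGenDeg (I ^ n) := by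
  intro n hn
  obtain ⟨_, hv, hvδ⟩ := hδ.1
  obtain ⟨α, hαI, rfl⟩ := extremePoints_convexHull_subset hv
  have hαδ : α.degree = δ := by
    have : ∑ i, (α i : ℝ) = δ := hvδ
    rw [Finsupp.degree_eq_sum]; exact_mod_cast this
  refine le_maxGenDeg (IsNoetherian.noetherian _) fun d hd => ?_
  have hnα : monomial (n • α) (1 : K) ∈ I ^ n := by
    simpa [monomial_pow] using Ideal.pow_mem_pow hαI n
  rw [hd] at hnα
  obtain ⟨g, ⟨hgI, hgd⟩, β, hβ, hβle⟩ :=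
    exists_le_of_mem_support_of_mem_span hnα (β := n • α) (mem_support_iff.2 (by simp))
  obtain ⟨f, hfI, hfβ⟩ := hI.exists_sum_le_of_mem_support_pow hgI hβ
  have hsum := sum_eq_nsmul_of_mem_extremePoints_newtonPolyhedron hv hαI
    (by omega) hfI (hfβ.trans hβle)
  calc δ * n = (n • α).degree := by simp [hαδ, mul_comm]
    _ = β.degree := by rw [le_antisymm hβle (hsum ▸ hfβ)]
    _ ≤ d := (degree_le_totalDegree hβ).trans hgd

/-- if `δ(I)` is the maximal ℓ¹-norm of a vertex of the Newton polyhedron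
of a monomial ideal `I`, then `d(I^n) ≥ δ(I)·n` for all `n ≥ 1`. -/
theorem maxGenDeg_ge_delta_mul
    {K : Type*} [Field K] (s : ℕ) (I : Ideal (MvPolynomial (Fin s) K))
    (hI : IsMonomialIdeal I) (hne : I ≠ ⊥) (hpr : I ≠ ⊤)
    (δ : ℕ)
    (hδ : IsGreatest ((fun x : Fin s → ℝ => ∑ i, x i) ''
      Set.extremePoints ℝ (newtonPolyhedron s I)) (δ : ℝ)) :
    ∀ n : ℕ, 1 ≤ n → δ * n ≤ maxGenDeg (I ^ n) :=
  maxGenDeg_ge_delta_mul_general s I hI δ hδ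
end

section
/- Let s ≥ 3 and δ ≥ s+1 be integers. Define v_i ∈ ℕ^s by v_i = (δ−1)e_i + e_{i+1} for 1 ≤ i ≤ s−1 and v_s = e_1 + (δ−1)e_s, and let v = (δ−s+1, 1, 1, ..., 1). Then v lies in the convex hull of {v_1,...,v_s}; moreover the unique coefficients α_1,...,α_s with Σα_i = 1 and Σα_i v_i = v are all strictly positive. -/
/-!
With `t = δ - 1`, the `j`-th coordinate of `∑ α i • v i` is `t * α j + α (j - 1)` (indices
mod `s`), so the claim concerns the cyclic system `t * α j + α (j - 1) = w j`. Since `t > 1`,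
comparing `t * |d j| = |d (j - 1)|` for the difference `d` of two solutions at a coordinate
where `|d|` is maximal shows `d = 0`, which gives uniqueness. With `x = -1/t`, the
vector `x ^ j` solves the system with right-hand side `(t + x ^ (s - 1)) • e₀`, so
`α j = 1/δ + (δ - s) x ^ j / (t + x ^ (s - 1))`; summing the equations gives
`δ ∑ α = ∑ w = δ`. Positivity follows from `x ^ j ≥ -1/t`, which reduces it to
`δ - s < δ - 2`.
-/

open Finset

section ShiftSystem

variable {G R : Type*} [AddGroup G] [Fintype G] [CommSemiring R]

theorem sum_mul_ite_eq_mul_add_sub [DecidableEq G] {a : G} (ha : a ≠ 0) (t : R) (γ : G → R)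
    (j : G) :
    ∑ i, γ i * (if j = i then t else if j = i + a then 1 else 0) = t * γ j + γ (j - a) := by
  have hne : j ≠ j - a := by simpa [eq_sub_iff_add_eq] using ha
  rw [Fintype.sum_eq_add j (j - a) hne fun i ⟨hij, hija⟩ => ?_]
  · simp [hne, mul_comm]
  · have : j ≠ i + a := fun h => hija (eq_sub_of_add_eq h.symm)
    simp [Ne.symm hij, this]

theorem add_one_mul_sum_eq_sum {t : R} {γ w : G → R} (a : G)
    (h : ∀ j, t * γ j + γ (j - a) = w j) : (t + 1) * ∑ j, γ j = ∑ j, w j := by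
  simp only [← h, sum_add_distrib, add_mul, one_mul, mul_sum]
  congr 1
  exact (Fintype.sum_equiv (Equiv.subRight a) _ _ fun _ => rfl).symm

end ShiftSystem

theorem eq_of_forall_mul_add_comp_eq {ι K : Type*} [Finite ι] [CommRing K] [LinearOrder K]
    [IsStrictOrderedRing K] {t : K} (ht : 1 < |t|) (σ : ι → ι) {α β : ι → K}
    (h : ∀ j, t * α j + α (σ j) = t * β j + β (σ j)) : α = β := by
  rcases isEmpty_or_nonempty ι with hι | hι
  · exact funext hι.elim
  set d := α - β with hd
  obtain ⟨j, hj⟩ := Finite.exists_max fun i => |d i|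
  have hdj : |t| * |d j| = |d (σ j)| := by
    rw [← abs_mul, ← abs_neg]
    congr 1
    have := h j
    simp only [hd, Pi.sub_apply, mul_sub]
    linarith
  have hmax : |d j| ≤ 0 :=
    nonpos_of_mul_nonpos_right (by linarith [hj (σ j)] : (|t| - 1) * |d j| ≤ 0) (sub_pos.2 ht)
  funext i
  have : d i = 0 := abs_nonpos_iff.mp ((hj i).trans hmax)
  simpa [hd, sub_eq_zero] using this

theorem neg_abs_le_pow {K : Type*} [CommRing K] [LinearOrder K] [IsStrictOrderedRing K] {y : K}
    (hy : |y| ≤ 1) (k : ℕ) : -|y| ≤ y ^ k := by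
  rcases Nat.eq_zero_or_pos k with rfl | hk
  · rw [pow_zero]
    linarith [abs_nonneg y]
  · calc -|y| ≤ -|y| ^ k := neg_le_neg (pow_le_of_le_one (abs_nonneg y) hy hk.ne')
      _ = -|y ^ k| := by rw [abs_pow]
      _ ≤ y ^ k := neg_abs_le _

theorem mul_pow_add_pow_val_sub_one {K : Type*} [CommRing K] {t x : K} (htx : t * x = -1)
    {n : ℕ} (j : Fin (n + 1)) :
    t * x ^ (j : ℕ) + x ^ ((j - 1 : Fin (n + 1)) : ℕ) = if j = 0 then t + x ^ n else 0 := by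
  rw [Fin.coe_sub_one]
  split_ifs with hj
  · simp [hj]
  · obtain ⟨k, hk⟩ := Nat.exists_eq_add_one_of_ne_zero (Fin.val_ne_zero_iff.mpr hj)
    rw [hk, Nat.add_sub_cancel, pow_succ, mul_left_comm, htx]
    ring

section CyclicSolution

variable {K : Type*} [Field K]

noncomputable def cyclicSolution (t c : K) (n : ℕ) (j : Fin (n + 1)) : K :=
  (t + 1)⁻¹ + c * (-t⁻¹) ^ (j : ℕ) / (t + (-t⁻¹) ^ n)

theorem mul_cyclicSolution_add_sub_one {t : K} (c : K) {n : ℕ} (ht : t ≠ 0) (ht1 : t + 1 ≠ 0)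
    (hD : t + (-t⁻¹) ^ n ≠ 0) (j : Fin (n + 1)) :
    t * cyclicSolution t c n j + cyclicSolution t c n (j - 1) = if j = 0 then c + 1 else 1 := by
  have hshift := mul_pow_add_pow_val_sub_one (show t * -t⁻¹ = -1 by field_simp) j
  calc t * cyclicSolution t c n j + cyclicSolution t c n (j - 1)
      = (t + 1) * (t + 1)⁻¹
          + c * (t * (-t⁻¹) ^ (j : ℕ) + (-t⁻¹) ^ ((j - 1 : Fin (n + 1)) : ℕ))
            / (t + (-t⁻¹) ^ n) := by
        unfold cyclicSolution
        ring
    _ = if j = 0 then c + 1 else 1 := by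
      rw [hshift]
      split_ifs
      · rw [mul_div_cancel_right₀ _ hD, mul_inv_cancel₀ ht1, add_comm]
      · simp [mul_inv_cancel₀ ht1]

theorem neg_inv_le_neg_inv_pow [LinearOrder K] [IsStrictOrderedRing K] {t : K} (ht : 1 ≤ t)
    (k : ℕ) : -t⁻¹ ≤ (-t⁻¹) ^ k := by
  have hu : |-t⁻¹| = t⁻¹ := by rw [abs_neg, abs_of_pos (by positivity)]
  simpa only [hu] using neg_abs_le_pow (hu.trans_le (inv_le_one_of_one_le₀ ht)) k

theorem add_neg_inv_pow_pos [LinearOrder K] [IsStrictOrderedRing K] {t : K} (ht : 1 < t)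
    (n : ℕ) : 0 < t + (-t⁻¹) ^ n := by
  linarith [neg_inv_le_neg_inv_pow ht.le n, inv_lt_one_of_one_lt₀ ht]

theorem cyclicSolution_pos [LinearOrder K] [IsStrictOrderedRing K] {t c : K} (ht : 1 < t)
    (hc : 0 ≤ c) (hct : c < t - 1) (n : ℕ) (j : Fin (n + 1)) : 0 < cyclicSolution t c n j := by
  set u := t⁻¹
  have htu : t * u = 1 := mul_inv_cancel₀ (by positivity)
  have hpow := neg_inv_le_neg_inv_pow ht.le
  have hD : t - u ≤ t + (-u) ^ n := by linarith [hpow n]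
  have hDpos := add_neg_inv_pow_pos ht n
  have key : c * u / (t + (-u) ^ n) < (t + 1)⁻¹ := by
    rw [div_lt_iff₀ hDpos, ← div_eq_inv_mul, lt_div_iff₀ (by linarith)]
    have hut : 0 < u * (t + 1) := by positivity
    have : (t - 1) * (u * (t + 1)) = t - u := by linear_combination t * htu
    nlinarith [mul_lt_mul_of_pos_right hct hut]
  have hlow : -(c * u / (t + (-u) ^ n)) ≤ c * (-u) ^ (j : ℕ) / (t + (-u) ^ n) := by
    rw [← neg_div, ← mul_neg]
    exact div_le_div_of_nonneg_right (mul_le_mul_of_nonneg_left (hpow j) hc) hDpos.le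
  unfold cyclicSolution
  linarith

end CyclicSolution

/-- for `s ≥ 3` and `δ ≥ s+1`, the vector `v = (δ−s+1, 1, ..., 1)` lies in
the convex hull of `v_1, ..., v_s` where `v_i = (δ−1)e_i + e_{i+1}` (cyclically); and the
unique coefficients `α_i` with `Σα_i = 1` and `Σα_i v_i = v` are all strictly positive. -/
theorem v_in_convex_hull_with_positive_coefficients
    (s : ℕ) [NeZero s] (hs : 3 ≤ s) (δ : ℕ) (hδ : s + 1 ≤ δ)
    (v : Fin s → Fin s → ℝ)
    (hvi : v = fun i j => if j = i then (δ : ℝ) - 1 else if j = i + 1 then 1 else 0)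
    (w : Fin s → ℝ)
    (hw : w = fun j => if j = 0 then (δ : ℝ) - s + 1 else 1) :
    ∃ α : Fin s → ℝ,
      (∀ i, 0 < α i) ∧ (∑ i, α i = 1) ∧ (∀ j, ∑ i, α i * v i j = w j) ∧
      ∀ β : Fin s → ℝ, (∀ i, 0 ≤ β i) → (∑ i, β i = 1) →
        (∀ j, ∑ i, β i * v i j = w j) → β = α := by
  subst hvi hw
  obtain ⟨n, rfl⟩ : ∃ n, s = n + 1 := ⟨s - 1, by omega⟩
  set t : ℝ := δ - 1
  set c : ℝ := δ - ((n + 1 : ℕ) : ℝ)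
  have hδs : ((n + 1 : ℕ) : ℝ) + 1 ≤ δ := by exact_mod_cast hδ
  have hs3 : (3 : ℝ) ≤ ((n + 1 : ℕ) : ℝ) := by exact_mod_cast hs
  have ht : 1 < t := by linarith
  have ht0 : 0 < t := by linarith
  have hrow := sum_mul_ite_eq_mul_add_sub (Fin.one_eq_zero_iff.not.mpr (by omega : n + 1 ≠ 1)) t
  have hsol := mul_cyclicSolution_add_sub_one c ht0.ne' (by linarith : 0 < t + 1).ne'
    (add_neg_inv_pow_pos ht n).ne'
  refine ⟨cyclicSolution t c n, cyclicSolution_pos ht (by linarith) (by linarith) n, ?_,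
    fun j => (hrow _ j).trans (hsol j), fun β _ _ hβ => ?_⟩
  · have hsum := add_one_mul_sum_eq_sum 1 hsol
    have hsum_w : ∑ j : Fin (n + 1), (if j = 0 then c + 1 else 1) = t + 1 := by
      simp only [Fin.sum_univ_succ, ↓reduceIte, Fin.succ_ne_zero, sum_const, card_univ,
        Fintype.card_fin, nsmul_eq_mul, mul_one, c, t]
      push_cast
      ring
    rw [hsum_w] at hsum
    exact mul_left_cancel₀ (by linarith : 0 < t + 1).ne' (hsum.trans (mul_one _).symm)
  · refine eq_of_forall_mul_add_comp_eq (abs_of_pos ht0 ▸ ht) (· - 1)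
      fun j => ?_
    rw [← hrow, hβ j, hsol j]
end
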